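/- arXiv:1601.07993 — 9 statements merged into one kernel-verified Lean document; each statement's English description precedes it below -/
import Mathlib

section
/- Let $X = (X_1,\dots,X_d)$ be a $d$-tuple of self-adjoint $n\times n$ complex matrices with $\sum_{j=1}^d X_j^2 \leq I_n$. Then $\|\sum_{j=1}^d X_j \otimes \overline{X_j}\| \leq 1$, where $\overline{X_j}$ denotes entrywise complex conjugation and the norm is the operator norm on $M_{n^2}(\mathbb{C})$. -/
/-!
Under `vec`, the operator `∑ⱼ Aⱼ ⊗ conj Bⱼ` acts on matrices as `V ↦ ∑ⱼ Zⱼᴴ V Yⱼ` with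
`Zⱼ = Bⱼᵀ`, `Yⱼ = Aⱼᵀ`, so it suffices that this map is a contraction for the Frobenius norm.
For `W = ∑ⱼ Zⱼᴴ V Yⱼ` one has `‖W‖² = ∑ⱼ ⟪Zⱼ W, V Yⱼ⟫`, and Cauchy–Schwarz bounds this by
`(∑ⱼ ‖Zⱼ W‖²)^½ (∑ⱼ ‖V Yⱼ‖²)^½ = tr (Wᴴ (∑ Zⱼᴴ Zⱼ) W)^½ tr (V (∑ Yⱼ Yⱼᴴ) Vᴴ)^½ ≤ ‖W‖ ‖V‖`.
-/

open Matrix WithLp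
open scoped Kronecker ComplexOrder Matrix.Norms.L2Operator InnerProductSpace

theorem norm_sum_inner_le {𝕜 ι E : Type*} [RCLike 𝕜] [Fintype ι] [NormedAddCommGroup E]
    [InnerProductSpace 𝕜 E] (a b : ι → E) :
    ‖∑ i, ⟪a i, b i⟫_𝕜‖ ≤ √(∑ i, ‖a i‖ ^ 2) * √(∑ i, ‖b i‖ ^ 2) := by
  simpa only [PiLp.inner_apply, PiLp.norm_eq_of_L2] using
    norm_inner_le_norm (𝕜 := 𝕜) (toLp 2 a : PiLp 2 fun _ : ι => E) (toLp 2 b)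

namespace Matrix

variable {𝕜 ι m n p q : Type*} [RCLike 𝕜] [Fintype ι] [Fintype m] [Fintype n] [Fintype p]
  [Fintype q]

theorem inner_toLp_vec (A B : Matrix m n 𝕜) :
    ⟪toLp 2 (vec A), toLp 2 (vec B)⟫_𝕜 = (Aᴴ * B).trace := by
  rw [EuclideanSpace.inner_eq_star_dotProduct, dotProduct_comm]
  exact star_vec_dotProduct_vec A B

theorem norm_toLp_vec_sq (A : Matrix m n 𝕜) :
    ‖(toLp 2 (vec A) : EuclideanSpace 𝕜 (n × m))‖ ^ 2 = RCLike.re (Aᴴ * A).trace := by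
  rw [← inner_toLp_vec, ← inner_self_eq_norm_sq (𝕜 := 𝕜)]

theorem re_trace_conjTranspose_mul_mul_le [DecidableEq m] {S : Matrix m m 𝕜}
    (hS : (1 - S).PosSemidef) (A : Matrix m n 𝕜) :
    RCLike.re (Aᴴ * S * A).trace ≤ RCLike.re (Aᴴ * A).trace := by
  have h := (RCLike.nonneg_iff.mp (hS.conjTranspose_mul_mul_same A).trace_nonneg).1
  rwa [Matrix.mul_sub, Matrix.sub_mul, Matrix.mul_one, trace_sub, map_sub, sub_nonneg] at h

theorem sum_re_trace_conjTranspose_mul_self_mul_left (Z : ι → Matrix m p 𝕜) (W : Matrix p q 𝕜) :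
    ∑ j, RCLike.re ((Z j * W)ᴴ * (Z j * W)).trace
      = RCLike.re (Wᴴ * (∑ j, (Z j)ᴴ * Z j) * W).trace := by
  simp only [Matrix.mul_sum, Matrix.sum_mul, trace_sum, map_sum, conjTranspose_mul,
    Matrix.mul_assoc]

theorem sum_re_trace_conjTranspose_mul_self_mul_right (V : Matrix m n 𝕜) (Y : ι → Matrix n q 𝕜) :
    ∑ j, RCLike.re ((V * Y j)ᴴ * (V * Y j)).trace
      = RCLike.re (V * (∑ j, Y j * (Y j)ᴴ) * Vᴴ).trace := by
  simp only [Matrix.mul_sum, Matrix.sum_mul, trace_sum, map_sum]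
  refine Finset.sum_congr rfl fun j _ => ?_
  rw [conjTranspose_mul, trace_mul_comm, Matrix.mul_assoc, Matrix.mul_assoc, Matrix.mul_assoc]

theorem norm_toLp_vec_sum_conjTranspose_mul_mul_le [DecidableEq n] [DecidableEq p]
    (Z : ι → Matrix m p 𝕜) (Y : ι → Matrix n q 𝕜)
    (hZ : (1 - ∑ j, (Z j)ᴴ * Z j).PosSemidef) (hY : (1 - ∑ j, Y j * (Y j)ᴴ).PosSemidef)
    (V : Matrix m n 𝕜) :
    ‖(toLp 2 (vec (∑ j, (Z j)ᴴ * V * Y j)) : EuclideanSpace 𝕜 (q × p))‖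
      ≤ ‖(toLp 2 (vec V) : EuclideanSpace 𝕜 (n × m))‖ := by
  set W := ∑ j, (Z j)ᴴ * V * Y j
  set w : EuclideanSpace 𝕜 (q × p) := toLp 2 (vec W)
  set v : EuclideanSpace 𝕜 (n × m) := toLp 2 (vec V)
  have hW : Wᴴ * W = ∑ j, (Z j * W)ᴴ * (V * Y j) := by
    simp only [conjTranspose_mul, Matrix.mul_assoc, ← Matrix.mul_sum]
    simp only [W, Matrix.mul_assoc]
  have hw : ⟪w, w⟫_𝕜 = ∑ j, ⟪toLp 2 (vec (Z j * W)), toLp 2 (vec (V * Y j))⟫_𝕜 := by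
    simp only [w, inner_toLp_vec, hW, trace_sum]
  have hZW : √(∑ j, ‖(toLp 2 (vec (Z j * W)) : EuclideanSpace 𝕜 (q × m))‖ ^ 2) ≤ ‖w‖ := by
    refine Real.sqrt_le_iff.mpr ⟨norm_nonneg _, ?_⟩
    simp only [norm_toLp_vec_sq, w, sum_re_trace_conjTranspose_mul_self_mul_left]
    exact re_trace_conjTranspose_mul_mul_le hZ W
  have hVY : √(∑ j, ‖(toLp 2 (vec (V * Y j)) : EuclideanSpace 𝕜 (q × m))‖ ^ 2) ≤ ‖v‖ := by
    refine Real.sqrt_le_iff.mpr ⟨norm_nonneg _, ?_⟩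
    simp only [norm_toLp_vec_sq, v, sum_re_trace_conjTranspose_mul_self_mul_right]
    have h := re_trace_conjTranspose_mul_mul_le hY Vᴴ
    rwa [conjTranspose_conjTranspose, trace_mul_comm V Vᴴ] at h
  have hwv : ‖w‖ ^ 2 ≤ ‖w‖ * ‖v‖ := by
    calc ‖w‖ ^ 2 = ‖⟪w, w⟫_𝕜‖ := by simp [inner_self_eq_norm_sq_to_K]
      _ ≤ _ := hw ▸ norm_sum_inner_le _ _
      _ ≤ ‖w‖ * ‖v‖ := mul_le_mul hZW hVY (Real.sqrt_nonneg _) (norm_nonneg _)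
  nlinarith [norm_nonneg w, norm_nonneg v]

theorem sum_kronecker_map_star_mulVec_vec (A : ι → Matrix m m 𝕜) (B : ι → Matrix n n 𝕜)
    (V : Matrix n m 𝕜) :
    (∑ j, A j ⊗ₖ (B j).map (starRingEnd 𝕜)) *ᵥ vec V = vec (∑ j, (B j)ᵀᴴ * V * (A j)ᵀ) := by
  simp only [sum_mulVec, kronecker_mulVec_vec, vec_sum]
  rfl

theorem norm_sum_kronecker_map_star_le_one [DecidableEq m] [DecidableEq n]
    (A : ι → Matrix m m 𝕜) (B : ι → Matrix n n 𝕜)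
    (hA : (1 - ∑ j, (A j)ᴴ * A j).PosSemidef) (hB : (1 - ∑ j, B j * (B j)ᴴ).PosSemidef) :
    ‖∑ j, A j ⊗ₖ (B j).map (starRingEnd 𝕜)‖ ≤ 1 := by
  have hBt : (1 - ∑ j, (B j)ᵀᴴ * (B j)ᵀ).PosSemidef := by
    simpa only [transpose_sub, transpose_one, transpose_sum, transpose_mul,
      conjTranspose_transpose_eq_transpose_conjTranspose] using posSemidef_transpose_iff.mpr hB
  have hAt : (1 - ∑ j, (A j)ᵀ * (A j)ᵀᴴ).PosSemidef := by
    simpa only [transpose_sub, transpose_one, transpose_sum, transpose_mul,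
      conjTranspose_transpose_eq_transpose_conjTranspose] using posSemidef_transpose_iff.mpr hA
  rw [cstar_norm_def]
  refine ContinuousLinearMap.opNorm_le_bound _ zero_le_one fun x => ?_
  obtain ⟨V, rfl⟩ : ∃ V : Matrix n m 𝕜, toLp 2 (vec V) = x := ⟨of fun i j => x (j, i), rfl⟩
  rw [toEuclideanCLM_toLp, sum_kronecker_map_star_mulVec_vec, one_mul]
  exact norm_toLp_vec_sum_conjTranspose_mul_mul_le _ _ hBt hAt V

end Matrix

/-- If `X₁,…,X_d` are self-adjoint `n × n` matrices with `∑ Xⱼ² ≤ I`, then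
`‖∑ Xⱼ ⊗ conj(Xⱼ)‖ ≤ 1` in the operator norm. -/
theorem stmt_1 (d n : ℕ) (X : Fin d → Matrix (Fin n) (Fin n) ℂ)
    (hX : ∀ j, (X j).IsHermitian)
    (hball : (1 - ∑ j, (X j) ^ 2).PosSemidef) :
    ‖∑ j, (X j) ⊗ₖ ((X j).map (starRingEnd ℂ))‖ ≤ 1 := by
  have hsq : ∀ j, (X j) ^ 2 = (X j)ᴴ * X j := fun j => by rw [sq, (hX j).eq]
  have hsq' : ∀ j, (X j) ^ 2 = X j * (X j)ᴴ := fun j => by rw [sq, (hX j).eq]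
  exact Matrix.norm_sum_kronecker_map_star_le_one X X (by simpa only [hsq] using hball)
    (by simpa only [hsq'] using hball)
end

section
/- For self-adjoint $n\times n$ complex matrices $A_1,\dots,A_d$ acting on $\mathbb{C}^n$ and self-adjoint $m\times m$ complex matrices $B_1,\dots,B_d$ acting on $\mathbb{C}^m$, one has $\|\sum_{i=1}^d A_i \otimes \overline{B_i}\| \leq \|\sum_{i=1}^d A_i \otimes \overline{A_i}\|^{1/2} \cdot \|\sum_{i=1}^d B_i \otimes \overline{B_i}\|^{1/2}$. -/
open Matrix
open scoped Kronecker Matrix.Norms.L2Operator ComplexConjugate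

namespace HaagerupAux

variable {d n m N k : ℕ}

/-- Ordered product of a word of matrices. -/
noncomputable def wProd (M : Fin d → Matrix (Fin N) (Fin N) ℂ) (w : Fin k → Fin d) :
    Matrix (Fin N) (Fin N) ℂ :=
  (List.ofFn fun j => M (w j)).prod

lemma wProd_zero (M : Fin d → Matrix (Fin N) (Fin N) ℂ) (w : Fin 0 → Fin d) :
    wProd M w = 1 := by simp [wProd]

lemma wProd_succ (M : Fin d → Matrix (Fin N) (Fin N) ℂ) (w : Fin (k + 1) → Fin d) :
    wProd M w = M (w 0) * wProd M (w ∘ Fin.succ) := by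
  rw [wProd, List.ofFn_succ, List.prod_cons]; rfl

lemma wProd_cons (M : Fin d → Matrix (Fin N) (Fin N) ℂ) (i : Fin d) (w : Fin k → Fin d) :
    wProd M (Fin.cons i w) = M i * wProd M w := by
  have h : (Fin.cons i w ∘ Fin.succ) = w := funext fun j => by simp
  rw [wProd_succ, h, Fin.cons_zero]


lemma sum_kron_pow (M : Fin d → Matrix (Fin n) (Fin n) ℂ)
    (P : Fin d → Matrix (Fin m) (Fin m) ℂ) (k : ℕ) :
    (∑ i, M i ⊗ₖ P i) ^ k = ∑ w : Fin k → Fin d, wProd M w ⊗ₖ wProd P w := by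
  induction k with
  | zero =>
    simp only [pow_zero]
    have h1 : ∀ w : Fin 0 → Fin d, wProd M w ⊗ₖ wProd P w = (1 : Matrix _ _ ℂ) := by
      intro w
      rw [wProd_zero, wProd_zero, Matrix.one_kronecker_one]
    rw [Finset.sum_congr rfl fun w _ => h1 w, Finset.sum_const, Finset.card_univ]
    have : Fintype.card (Fin 0 → Fin d) = 1 := by simp
    rw [this, one_smul]
  | succ k ih =>
    rw [pow_succ', ih, Finset.mul_sum]
    rw [← (Fin.consEquiv fun _ : Fin (k + 1) => Fin d).sum_comp
      (fun w => wProd M w ⊗ₖ wProd P w)]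
    rw [Fintype.sum_prod_type, Finset.sum_comm]
    refine Finset.sum_congr rfl fun w _ => ?_
    rw [Finset.sum_mul]
    refine Finset.sum_congr rfl fun i _ => ?_
    show (M i ⊗ₖ P i) * (wProd M w ⊗ₖ wProd P w)
        = wProd M (Fin.cons i w) ⊗ₖ wProd P (Fin.cons i w)
    rw [wProd_cons, wProd_cons, ← Matrix.mul_kronecker_mul]


lemma wProd_map (M : Fin d → Matrix (Fin N) (Fin N) ℂ) :
    ∀ {k : ℕ} (w : Fin k → Fin d),
      wProd (fun i => (M i).map (starRingEnd ℂ)) w = (wProd M w).map (starRingEnd ℂ)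
  | 0, w => by
    rw [wProd_zero, wProd_zero, Matrix.map_one _ (map_zero _) (map_one _)]
  | (k + 1), w => by
    rw [wProd_succ, wProd_succ, Matrix.map_mul, wProd_map M (w ∘ Fin.succ)]

lemma trace_map_conj (M : Matrix (Fin N) (Fin N) ℂ) :
    (M.map (starRingEnd ℂ)).trace = (starRingEnd ℂ) M.trace := by
  simp [Matrix.trace, Matrix.diag, Matrix.map_apply, map_sum]

lemma trace_sum_kron_pow (M : Fin d → Matrix (Fin n) (Fin n) ℂ)
    (P : Fin d → Matrix (Fin m) (Fin m) ℂ) (k : ℕ) :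
    ((∑ i, M i ⊗ₖ (P i).map (starRingEnd ℂ)) ^ k).trace
      = ∑ w : Fin k → Fin d,
          (wProd M w).trace * (starRingEnd ℂ) ((wProd P w).trace) := by
  rw [sum_kron_pow M (fun i => (P i).map (starRingEnd ℂ)) k, Matrix.trace_sum]
  refine Finset.sum_congr rfl fun w _ => ?_
  rw [Matrix.trace_kronecker, wProd_map, trace_map_conj]


lemma eucl_apply_le {ι : Type*} [Fintype ι] (x : EuclideanSpace ℂ ι) (i : ι) :
    ‖x i‖ ≤ ‖x‖ := by
  rw [EuclideanSpace.norm_eq, show ‖x i‖ = Real.sqrt (‖x i‖ ^ 2) from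
    (Real.sqrt_sq (norm_nonneg _)).symm]
  exact Real.sqrt_le_sqrt <| Finset.single_le_sum
    (f := fun j => ‖x j‖ ^ 2) (fun _ _ => sq_nonneg _) (Finset.mem_univ i)

lemma entry_le_norm {p q : Type*} [Fintype p] [Fintype q] [DecidableEq p] [DecidableEq q]
    (M : Matrix p q ℂ) (i : p) (j : q) : ‖M i j‖ ≤ ‖M‖ := by
  have h := M.l2_opNorm_mulVec (EuclideanSpace.single j (1 : ℂ))
  rw [EuclideanSpace.norm_single, norm_one, mul_one] at h
  refine le_trans (le_trans (le_of_eq ?_)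
    (eucl_apply_le ((EuclideanSpace.equiv p ℂ).symm
      (M *ᵥ EuclideanSpace.single j (1 : ℂ))) i)) h
  show ‖M i j‖ = ‖(M *ᵥ (EuclideanSpace.single j (1 : ℂ) : EuclideanSpace ℂ q)) i‖
  congr 1
  simp [Matrix.mulVec, dotProduct, EuclideanSpace.single_apply]

lemma norm_trace_le {p : Type*} [Fintype p] [DecidableEq p] (M : Matrix p p ℂ) :
    ‖M.trace‖ ≤ (Fintype.card p : ℝ) * ‖M‖ := by
  calc ‖M.trace‖ ≤ ∑ i, ‖M i i‖ := by
        rw [Matrix.trace]; exact norm_sum_le _ _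
    _ ≤ ∑ _i : p, ‖M‖ := Finset.sum_le_sum fun i _ => entry_le_norm M i i
    _ = (Fintype.card p : ℝ) * ‖M‖ := by
        rw [Finset.sum_const, Finset.card_univ, nsmul_eq_mul]


lemma norm_le_sqrt_trace {p q : Type*} [Fintype p] [Fintype q] [DecidableEq p] [DecidableEq q]
    (M : Matrix p q ℂ) : ‖M‖ ≤ Real.sqrt ((Mᴴ * M).trace.re) := by
  have htr : ((Mᴴ * M).trace).re = ∑ j, ∑ i, ‖M i j‖ ^ 2 := by
    rw [Matrix.trace]
    rw [Complex.re_sum]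
    refine Finset.sum_congr rfl fun j _ => ?_
    rw [Matrix.diag_apply, Matrix.mul_apply, Complex.re_sum]
    refine Finset.sum_congr rfl fun i _ => ?_
    rw [Matrix.conjTranspose_apply]
    rw [show star (M i j) * M i j = (starRingEnd ℂ) (M i j) * M i j from rfl]
    rw [mul_comm, Complex.mul_conj]
    rw [Complex.ofReal_re, Complex.normSq_eq_norm_sq]
  rw [Matrix.l2_opNorm_def]
  refine ContinuousLinearMap.opNorm_le_bound _ (Real.sqrt_nonneg _) fun x => ?_
  have hv : ‖(LinearEquiv.trans Matrix.toEuclideanLin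
        LinearMap.toContinuousLinearMap M) x‖ = Real.sqrt (∑ i, ‖(M *ᵥ ⇑x) i‖ ^ 2) := by
    rw [EuclideanSpace.norm_eq]; rfl
  rw [hv]
  have hbound : ∑ i, ‖(M *ᵥ ⇑x) i‖ ^ 2 ≤ (∑ i, ∑ j, ‖M i j‖ ^ 2) * ∑ j, ‖x j‖ ^ 2 := by
    rw [Finset.sum_mul]
    refine Finset.sum_le_sum fun i _ => ?_
    have h1 : ‖(M *ᵥ ⇑x) i‖ ≤ ∑ j, ‖M i j‖ * ‖x j‖ := by
      rw [Matrix.mulVec, dotProduct]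
      refine le_trans (norm_sum_le _ _) (le_of_eq ?_)
      exact Finset.sum_congr rfl fun j _ => norm_mul _ _
    calc ‖(M *ᵥ ⇑x) i‖ ^ 2 ≤ (∑ j, ‖M i j‖ * ‖x j‖) ^ 2 :=
          pow_le_pow_left₀ (norm_nonneg _) h1 2
      _ ≤ (∑ j, ‖M i j‖ ^ 2) * ∑ j, ‖x j‖ ^ 2 :=
          Finset.sum_mul_sq_le_sq_mul_sq _ _ _
  calc Real.sqrt (∑ i, ‖(M *ᵥ ⇑x) i‖ ^ 2)
      ≤ Real.sqrt ((∑ i, ∑ j, ‖M i j‖ ^ 2) * ∑ j, ‖x j‖ ^ 2) := Real.sqrt_le_sqrt hbound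
    _ = Real.sqrt (∑ i, ∑ j, ‖M i j‖ ^ 2) * Real.sqrt (∑ j, ‖x j‖ ^ 2) :=
        Real.sqrt_mul (Finset.sum_nonneg fun _ _ => Finset.sum_nonneg fun _ _ => sq_nonneg _) _
    _ = Real.sqrt ((Mᴴ * M).trace.re) * ‖x‖ := by
        rw [htr, Finset.sum_comm, EuclideanSpace.norm_eq]


lemma sqrt_pow' (x : ℝ) (hx : 0 ≤ x) : ∀ k : ℕ, Real.sqrt (x ^ k) = Real.sqrt x ^ k
  | 0 => by simp
  | (k + 1) => by
    rw [pow_succ, pow_succ, Real.sqrt_mul (pow_nonneg hx k), sqrt_pow' x hx k]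

lemma herm_pow_two_norm {p : Type*} [Fintype p] [DecidableEq p] {T : Matrix p p ℂ}
    (hT : T.IsHermitian) : ∀ j : ℕ, ‖T ^ 2 ^ j‖ = ‖T‖ ^ 2 ^ j
  | 0 => by simp
  | (j + 1) => by
    have h1 : T ^ 2 ^ (j + 1) = (T ^ 2 ^ j)ᴴ * T ^ 2 ^ j := by
      rw [hT.pow (2 ^ j), ← pow_add]
      congr 1
      rw [pow_succ, Nat.mul_two]
    rw [h1, Matrix.l2_opNorm_conjTranspose_mul_self, herm_pow_two_norm hT j, ← pow_add,
      pow_succ, Nat.mul_two]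

lemma kron_conjTranspose {p q : Type*} (A : Matrix p p ℂ) (B : Matrix q q ℂ) :
    (A ⊗ₖ B)ᴴ = Aᴴ ⊗ₖ Bᴴ := by
  ext ⟨i, j⟩ ⟨k, l⟩
  simp [Matrix.conjTranspose_apply, star_mul']

lemma le_of_forall_pow_le {x y c : ℝ} (hx : 0 ≤ x) (hy : 0 ≤ y)
    (h : ∀ j : ℕ, x ^ 2 ^ (j + 1) ≤ c * y ^ 2 ^ (j + 1)) : x ≤ y := by
  by_contra hlt
  push_neg at hlt
  rcases eq_or_lt_of_le hy with hy0 | hy0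
  · have h0 := h 0
    rw [← hy0] at h0
    simp only [pow_succ, pow_zero, one_mul] at h0
    have hx0 : x = 0 := by nlinarith [sq_nonneg x]
    rw [hx0, ← hy0] at hlt
    exact lt_irrefl _ hlt
  · have hr : 1 < x / y := (one_lt_div hy0).mpr hlt
    obtain ⟨M, hM⟩ := pow_unbounded_of_one_lt c hr
    have hj := h M
    have hdiv : (x / y) ^ 2 ^ (M + 1) ≤ c := by
      rw [div_pow, div_le_iff₀ (pow_pos hy0 _)]
      exact hj
    have hmono : (x / y) ^ M ≤ (x / y) ^ 2 ^ (M + 1) :=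
      pow_le_pow_right₀ hr.le (le_trans (Nat.lt_two_pow_self (n := M)).le
        (Nat.pow_le_pow_right (by norm_num) (Nat.le_succ M)))
    exact absurd (le_trans hmono hdiv) (not_le.mpr hM)


lemma conj_map_isHermitian {p : ℕ} {M : Matrix (Fin p) (Fin p) ℂ} (hM : M.IsHermitian) :
    (M.map (starRingEnd ℂ)).IsHermitian := by
  rw [Matrix.IsHermitian, ← Matrix.conjTranspose_map (starRingEnd ℂ) (fun a => by simp), hM.eq]

end HaagerupAux

open HaagerupAux
/-- Haagerup's inequality:
`‖∑ Aᵢ ⊗ conj(Bᵢ)‖ ≤ ‖∑ Aᵢ ⊗ conj(Aᵢ)‖^(1/2) ⬝ ‖∑ Bᵢ ⊗ conj(Bᵢ)‖^(1/2)`. -/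
theorem stmt_2 (d n m : ℕ)
    (A : Fin d → Matrix (Fin n) (Fin n) ℂ) (B : Fin d → Matrix (Fin m) (Fin m) ℂ)
    (hA : ∀ i, (A i).IsHermitian) (hB : ∀ i, (B i).IsHermitian) :
    ‖∑ i, (A i) ⊗ₖ ((B i).map (starRingEnd ℂ))‖ ≤
      Real.sqrt ‖∑ i, (A i) ⊗ₖ ((A i).map (starRingEnd ℂ))‖ *
        Real.sqrt ‖∑ i, (B i) ⊗ₖ ((B i).map (starRingEnd ℂ))‖ := by
  classical
  set T := ∑ i, (A i) ⊗ₖ ((B i).map (starRingEnd ℂ)) with hTdef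
  set S := ∑ i, (A i) ⊗ₖ ((A i).map (starRingEnd ℂ)) with hSdef
  set R := ∑ i, (B i) ⊗ₖ ((B i).map (starRingEnd ℂ)) with hRdef
  have hTH : T.IsHermitian := by
    rw [Matrix.IsHermitian, hTdef, Matrix.conjTranspose_sum]
    refine Finset.sum_congr rfl fun i _ => ?_
    rw [kron_conjTranspose, (hA i).eq, (conj_map_isHermitian (hB i)).eq]
  have key : ∀ j : ℕ, ‖T‖ ^ 2 ^ (j + 1)
      ≤ ((n * m : ℕ) : ℝ) * (Real.sqrt ‖S‖ * Real.sqrt ‖R‖) ^ 2 ^ (j + 1) := by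
    intro j
    have hKpos : 0 < 2 ^ (j + 1) := Nat.pow_pos (by norm_num)
    -- trace identities
    have htrT := trace_sum_kron_pow A B (2 ^ (j + 1))
    have htrS := trace_sum_kron_pow A A (2 ^ (j + 1))
    have htrR := trace_sum_kron_pow B B (2 ^ (j + 1))
    rw [← hTdef] at htrT
    rw [← hSdef] at htrS
    rw [← hRdef] at htrR
    have hSre : (S ^ 2 ^ (j + 1)).trace.re
        = ∑ w : Fin (2 ^ (j + 1)) → Fin d, ‖(wProd A w).trace‖ ^ 2 := by
      rw [htrS, Complex.re_sum]
      refine Finset.sum_congr rfl fun w _ => ?_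
      rw [Complex.mul_conj, Complex.ofReal_re, Complex.normSq_eq_norm_sq]
    have hRre : (R ^ 2 ^ (j + 1)).trace.re
        = ∑ w : Fin (2 ^ (j + 1)) → Fin d, ‖(wProd B w).trace‖ ^ 2 := by
      rw [htrR, Complex.re_sum]
      refine Finset.sum_congr rfl fun w _ => ?_
      rw [Complex.mul_conj, Complex.ofReal_re, Complex.normSq_eq_norm_sq]
    -- step 1 : ‖T‖ ^ K ≤ ‖trace (T ^ K)‖
    have s1 : ‖T‖ ^ 2 ^ (j + 1) ≤ ‖(T ^ 2 ^ (j + 1)).trace‖ := by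
      have e1 : ‖T‖ ^ 2 ^ (j + 1) = ‖T ^ 2 ^ j‖ ^ 2 := by
        rw [herm_pow_two_norm hTH j, ← pow_mul, ← pow_succ]
      have e2 : (T ^ 2 ^ j)ᴴ * T ^ 2 ^ j = T ^ 2 ^ (j + 1) := by
        rw [(hTH.pow (2 ^ j)).eq, ← pow_add, ← Nat.mul_two, ← pow_succ]
      have s2 := norm_le_sqrt_trace (T ^ 2 ^ j)
      rw [e2] at s2
      calc ‖T‖ ^ 2 ^ (j + 1) = ‖T ^ 2 ^ j‖ ^ 2 := e1
        _ ≤ Real.sqrt ((T ^ 2 ^ (j + 1)).trace.re) ^ 2 :=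
            pow_le_pow_left₀ (norm_nonneg _) s2 2
        _ ≤ Real.sqrt ‖(T ^ 2 ^ (j + 1)).trace‖ ^ 2 := by
            refine pow_le_pow_left₀ (Real.sqrt_nonneg _) (Real.sqrt_le_sqrt ?_) 2
            exact le_trans (Complex.re_le_norm _) (le_of_eq rfl)
        _ = ‖(T ^ 2 ^ (j + 1)).trace‖ := Real.sq_sqrt (norm_nonneg _)
    -- step 2 : Cauchy–Schwarz over words
    have s3 : ‖(T ^ 2 ^ (j + 1)).trace‖
        ≤ Real.sqrt ((S ^ 2 ^ (j + 1)).trace.re) * Real.sqrt ((R ^ 2 ^ (j + 1)).trace.re) := by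
      rw [htrT, hSre, hRre]
      have h4 : ‖∑ w : Fin (2 ^ (j + 1)) → Fin d,
            (wProd A w).trace * (starRingEnd ℂ) ((wProd B w).trace)‖
          ≤ ∑ w : Fin (2 ^ (j + 1)) → Fin d, ‖(wProd A w).trace‖ * ‖(wProd B w).trace‖ := by
        refine le_trans (norm_sum_le _ _) (le_of_eq (Finset.sum_congr rfl fun w _ => ?_))
        rw [norm_mul, RCLike.norm_conj]
      refine le_trans h4 ?_
      have h5 : (0 : ℝ) ≤ ∑ w : Fin (2 ^ (j + 1)) → Fin d,
          ‖(wProd A w).trace‖ * ‖(wProd B w).trace‖ :=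
        Finset.sum_nonneg fun _ _ => mul_nonneg (norm_nonneg _) (norm_nonneg _)
      have h6 := Finset.sum_mul_sq_le_sq_mul_sq Finset.univ
        (fun w : Fin (2 ^ (j + 1)) → Fin d => ‖(wProd A w).trace‖)
        (fun w => ‖(wProd B w).trace‖)
      calc (∑ w : Fin (2 ^ (j + 1)) → Fin d, ‖(wProd A w).trace‖ * ‖(wProd B w).trace‖)
          = Real.sqrt ((∑ w : Fin (2 ^ (j + 1)) → Fin d,
              ‖(wProd A w).trace‖ * ‖(wProd B w).trace‖) ^ 2) := (Real.sqrt_sq h5).symm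
        _ ≤ Real.sqrt ((∑ w : Fin (2 ^ (j + 1)) → Fin d, ‖(wProd A w).trace‖ ^ 2)
              * ∑ w : Fin (2 ^ (j + 1)) → Fin d, ‖(wProd B w).trace‖ ^ 2) :=
            Real.sqrt_le_sqrt h6
        _ = _ := Real.sqrt_mul (Finset.sum_nonneg fun _ _ => sq_nonneg _) _
    -- step 3 : trace bounds
    have s4 : (S ^ 2 ^ (j + 1)).trace.re ≤ ((n * n : ℕ) : ℝ) * ‖S‖ ^ 2 ^ (j + 1) := by
      have b1 : (S ^ 2 ^ (j + 1)).trace.re ≤ ‖(S ^ 2 ^ (j + 1)).trace‖ :=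
        le_trans (Complex.re_le_norm _) (le_of_eq rfl)
      have b2 := norm_trace_le (S ^ 2 ^ (j + 1))
      have b3 : ‖S ^ 2 ^ (j + 1)‖ ≤ ‖S‖ ^ 2 ^ (j + 1) := norm_pow_le' S hKpos
      have b4 : (Fintype.card (Fin n × Fin n) : ℝ) = ((n * n : ℕ) : ℝ) := by simp
      calc (S ^ 2 ^ (j + 1)).trace.re ≤ ‖(S ^ 2 ^ (j + 1)).trace‖ := b1
        _ ≤ (Fintype.card (Fin n × Fin n) : ℝ) * ‖S ^ 2 ^ (j + 1)‖ := b2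
        _ ≤ (Fintype.card (Fin n × Fin n) : ℝ) * ‖S‖ ^ 2 ^ (j + 1) :=
            mul_le_mul_of_nonneg_left b3 (Nat.cast_nonneg _)
        _ = ((n * n : ℕ) : ℝ) * ‖S‖ ^ 2 ^ (j + 1) := by rw [b4]
    have s5 : (R ^ 2 ^ (j + 1)).trace.re ≤ ((m * m : ℕ) : ℝ) * ‖R‖ ^ 2 ^ (j + 1) := by
      have b1 : (R ^ 2 ^ (j + 1)).trace.re ≤ ‖(R ^ 2 ^ (j + 1)).trace‖ :=
        le_trans (Complex.re_le_norm _) (le_of_eq rfl)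
      have b2 := norm_trace_le (R ^ 2 ^ (j + 1))
      have b3 : ‖R ^ 2 ^ (j + 1)‖ ≤ ‖R‖ ^ 2 ^ (j + 1) := norm_pow_le' R hKpos
      have b4 : (Fintype.card (Fin m × Fin m) : ℝ) = ((m * m : ℕ) : ℝ) := by simp
      calc (R ^ 2 ^ (j + 1)).trace.re ≤ ‖(R ^ 2 ^ (j + 1)).trace‖ := b1
        _ ≤ (Fintype.card (Fin m × Fin m) : ℝ) * ‖R ^ 2 ^ (j + 1)‖ := b2
        _ ≤ (Fintype.card (Fin m × Fin m) : ℝ) * ‖R‖ ^ 2 ^ (j + 1) :=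
            mul_le_mul_of_nonneg_left b3 (Nat.cast_nonneg _)
        _ = ((m * m : ℕ) : ℝ) * ‖R‖ ^ 2 ^ (j + 1) := by rw [b4]
    -- combine
    have s6 : Real.sqrt ((S ^ 2 ^ (j + 1)).trace.re)
        ≤ (n : ℝ) * Real.sqrt ‖S‖ ^ 2 ^ (j + 1) := by
      refine le_trans (Real.sqrt_le_sqrt s4) (le_of_eq ?_)
      rw [Real.sqrt_mul (by positivity), sqrt_pow' _ (norm_nonneg _)]
      congr 1
      rw [Nat.cast_mul, Real.sqrt_mul_self (Nat.cast_nonneg _)]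
    have s7 : Real.sqrt ((R ^ 2 ^ (j + 1)).trace.re)
        ≤ (m : ℝ) * Real.sqrt ‖R‖ ^ 2 ^ (j + 1) := by
      refine le_trans (Real.sqrt_le_sqrt s5) (le_of_eq ?_)
      rw [Real.sqrt_mul (by positivity), sqrt_pow' _ (norm_nonneg _)]
      congr 1
      rw [Nat.cast_mul, Real.sqrt_mul_self (Nat.cast_nonneg _)]
    calc ‖T‖ ^ 2 ^ (j + 1) ≤ ‖(T ^ 2 ^ (j + 1)).trace‖ := s1
      _ ≤ Real.sqrt ((S ^ 2 ^ (j + 1)).trace.re)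
          * Real.sqrt ((R ^ 2 ^ (j + 1)).trace.re) := s3
      _ ≤ ((n : ℝ) * Real.sqrt ‖S‖ ^ 2 ^ (j + 1))
          * ((m : ℝ) * Real.sqrt ‖R‖ ^ 2 ^ (j + 1)) :=
          mul_le_mul s6 s7 (Real.sqrt_nonneg _) (by positivity)
      _ = ((n * m : ℕ) : ℝ) * (Real.sqrt ‖S‖ * Real.sqrt ‖R‖) ^ 2 ^ (j + 1) := by
          rw [mul_pow]
          push_cast
          ring
  exact le_of_forall_pow_le (norm_nonneg T)
    (mul_nonneg (Real.sqrt_nonneg _) (Real.sqrt_nonneg _)) key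
end

section
/- For every $d \geq 1$ there exist self-adjoint matrices $B_1,\dots,B_d \in M_{2^{d-1}}(\mathbb{C})$ such that (i) for every unit vector $v \in \mathbb{R}^d$, $\sum_{i=1}^d v_i B_i \leq I$, and (ii) $d$ is an eigenvalue of $\sum_{i=1}^d B_i \otimes B_i$. Consequently, if $\sum_{i=1}^d B_i \otimes B_i \leq \rho I$, then $\rho \geq d$. -/
/-!
Tensoring with the Pauli matrices `X` and `Z` produces real symmetric matrices `B₁, …, B_d` with
`B_i² = 1` and `B_i B_j = -B_j B_i` for `i ≠ j`. For a unit vector `v` the matrix `M = ∑ vᵢ Bᵢ`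
is then a Hermitian involution, so `1 - M = (1 - M)ᴴ (1 - M) / 2 ≥ 0`. Since each `Bᵢ` is real
orthogonal, `(Bᵢ ⊗ Bᵢ) vec 1 = vec (Bᵢ Bᵢᵀ) = vec 1`: the maximally entangled vector `vec 1` is an
eigenvector of `∑ Bᵢ ⊗ Bᵢ` for the eigenvalue `d`, and testing `ρ • 1 - ∑ Bᵢ ⊗ Bᵢ ≥ 0` against it
gives `d ≤ ρ`.
-/

open Matrix
open scoped Kronecker ComplexOrder

theorem sum_smul_mul_sum_smul_of_anticommute {ι K A : Type*} [Fintype ι] [Field K] [CharZero K]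
    [Ring A] [Algebra K A] {c : ι → A} (hsq : ∀ i, c i * c i = 1)
    (hanti : ∀ i j, i ≠ j → c i * c j = -(c j * c i)) (v : ι → K) :
    (∑ i, v i • c i) * (∑ i, v i • c i) = (∑ i, v i ^ 2) • 1 := by
  classical
  set M := ∑ i, v i • c i
  have anticomm : ∀ i j, c i * c j + c j * c i = if i = j then (2 : K) • 1 else 0 := by
    intro i j
    split_ifs with h
    · rw [h, hsq, two_smul]
    · rw [hanti i j h, neg_add_cancel]
  have expand : M * M = ∑ i, ∑ j, (v i * v j) • (c i * c j) := by
    simp only [M, Finset.sum_mul_sum, smul_mul_smul_comm]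
  have expand_swap : M * M = ∑ i, ∑ j, (v i * v j) • (c j * c i) := by
    rw [expand, Finset.sum_comm]
    simp only [mul_comm (v _) (v _)]
  have double : (2 : K) • (M * M) = (2 : K) • (∑ i, v i ^ 2) • 1 :=
    calc (2 : K) • (M * M)
        = (∑ i, ∑ j, (v i * v j) • (c i * c j)) + ∑ i, ∑ j, (v i * v j) • (c j * c i) := by
          rw [two_smul, ← expand, ← expand_swap]
      _ = ∑ i, ∑ j, (v i * v j) • (c i * c j + c j * c i) := by
          simp only [smul_add, Finset.sum_add_distrib]
      _ = (2 : K) • (∑ i, v i ^ 2) • 1 := by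
          simp only [anticomm, smul_ite, smul_zero, Finset.sum_ite_eq, Finset.mem_univ, if_true,
            smul_smul, ← Finset.sum_smul, Finset.sum_mul, sq, mul_comm (2 : K)]
  exact smul_right_injective A (two_ne_zero : (2 : K) ≠ 0) double

namespace Matrix

theorem neg_kronecker {α l m n p : Type*} [Mul α] [HasDistribNeg α] (A : Matrix l m α)
    (B : Matrix n p α) : (-A) ⊗ₖ B = -(A ⊗ₖ B) := by
  ext; simp [neg_mul]

theorem kronecker_neg {α l m n p : Type*} [Mul α] [HasDistribNeg α] (A : Matrix l m α)
    (B : Matrix n p α) : A ⊗ₖ (-B) = -(A ⊗ₖ B) := by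
  ext; simp [mul_neg]

variable {n : Type*} [Fintype n]

theorem PosSemidef.nonneg_of_mulVec_eq_smul {𝕜 : Type*} [RCLike 𝕜] {P : Matrix n n 𝕜}
    (hP : P.PosSemidef) {μ : 𝕜} {w : n → 𝕜} (hw : w ≠ 0) (h : P *ᵥ w = μ • w) : 0 ≤ μ := by
  have hquad := hP.dotProduct_mulVec_nonneg w
  rw [h, dotProduct_smul, smul_eq_mul] at hquad
  have hnorm : 0 < star w ⬝ᵥ w := dotProduct_star_self_pos_iff.mpr hw
  calc 0 ≤ μ * (star w ⬝ᵥ w) * (star w ⬝ᵥ w)⁻¹ := mul_nonneg hquad (RCLike.inv_pos.mpr hnorm).le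
    _ = μ := by rw [mul_assoc, mul_inv_cancel₀ hnorm.ne', mul_one]

variable [DecidableEq n]

theorem IsHermitian.posSemidef_one_sub_of_mul_self_eq_one {𝕜 : Type*} [RCLike 𝕜]
    {M : Matrix n n 𝕜} (hM : M.IsHermitian) (hsq : M * M = 1) : (1 - M).PosSemidef := by
  have hsquare : (1 - M)ᴴ * (1 - M) = (2 : ℝ) • (1 - M) := by
    calc (1 - M)ᴴ * (1 - M) = 1 - M - M + M * M := by
          rw [(isHermitian_one.sub hM).eq]; noncomm_ring
      _ = (2 : ℝ) • (1 - M) := by rw [hsq, two_smul]; abel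
  have : 1 - M = (2⁻¹ : ℝ) • ((1 - M)ᴴ * (1 - M)) := by
    rw [hsquare, smul_smul, inv_mul_cancel₀ two_ne_zero, one_smul]
  rw [this]
  exact (posSemidef_conjTranspose_mul_self _).smul (by norm_num)

theorem kronecker_mulVec_vec_one {R : Type*} [CommRing R] {C : Matrix n n R}
    (hC : C * Cᵀ = 1) : (C ⊗ₖ C) *ᵥ vec 1 = vec 1 := by
  rw [kronecker_mulVec_vec, Matrix.mul_one, hC]

theorem mem_spectrum_of_mulVec_eq_smul {K : Type*} [Field K] {A : Matrix n n K} {μ : K}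
    {w : n → K} (hw : w ≠ 0) (h : A *ᵥ w = μ • w) : μ ∈ spectrum K A := by
  rw [← spectrum_toLin', ← Module.End.hasEigenvalue_iff_mem_spectrum]
  exact Module.End.hasEigenvalue_of_hasEigenvector
    ⟨Module.End.mem_eigenspace_iff.mpr (by rwa [toLin'_apply]), hw⟩

theorem sum_kronecker_mulVec_vec_one {ι R : Type*} [Fintype ι] [CommRing R]
    {C : ι → Matrix n n R} (hC : ∀ i, C i * (C i)ᵀ = 1) :
    (∑ i, C i ⊗ₖ C i) *ᵥ vec 1 = (Fintype.card ι : R) • vec 1 := by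
  simp only [sum_mulVec, kronecker_mulVec_vec_one (hC _), Finset.sum_const, Finset.card_univ,
    Nat.cast_smul_eq_nsmul]

end Matrix

section Clifford

variable {R : Type*} [CommRing R]

def pauliX : Matrix (Fin 2) (Fin 2) R := !![0, 1; 1, 0]

def pauliZ : Matrix (Fin 2) (Fin 2) R := !![1, 0; 0, -1]

theorem pauliX_mul_self : (pauliX * pauliX : Matrix (Fin 2) (Fin 2) R) = 1 := by
  ext i j; fin_cases i <;> fin_cases j <;> simp [pauliX]

theorem pauliZ_mul_self : (pauliZ * pauliZ : Matrix (Fin 2) (Fin 2) R) = 1 := by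
  ext i j; fin_cases i <;> fin_cases j <;> simp [pauliZ]

theorem pauliZ_mul_pauliX : (pauliZ * pauliX : Matrix (Fin 2) (Fin 2) R) = -(pauliX * pauliZ) := by
  ext i j; fin_cases i <;> fin_cases j <;> simp [pauliX, pauliZ]

theorem transpose_pauliX : (pauliX : Matrix (Fin 2) (Fin 2) R)ᵀ = pauliX := by
  ext i j; fin_cases i <;> fin_cases j <;> simp [pauliX]

theorem transpose_pauliZ : (pauliZ : Matrix (Fin 2) (Fin 2) R)ᵀ = pauliZ := by
  ext i j; fin_cases i <;> fin_cases j <;> simp [pauliZ]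

theorem conjTranspose_pauliX [StarRing R] : (pauliX : Matrix (Fin 2) (Fin 2) R)ᴴ = pauliX := by
  ext i j; fin_cases i <;> fin_cases j <;> simp [pauliX]

theorem conjTranspose_pauliZ [StarRing R] : (pauliZ : Matrix (Fin 2) (Fin 2) R)ᴴ = pauliZ := by
  ext i j; fin_cases i <;> fin_cases j <;> simp [pauliZ]

def finTwoProdPowEquiv (k : ℕ) : Fin 2 × Fin (2 ^ k) ≃ Fin (2 ^ (k + 1)) :=
  finProdFinEquiv.trans (finCongr (pow_succ' 2 k).symm)

/-- The inductive construction `B_i' = X ⊗ B_i`, `B_{k+2}' = Z ⊗ 1`, indexed from `0`, with the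
index set `Fin 2 × Fin (2 ^ k)` of the Kronecker product flattened to `Fin (2 ^ (k + 1))`. -/
def cliffordMatrix : (k : ℕ) → Fin (k + 1) → Matrix (Fin (2 ^ k)) (Fin (2 ^ k)) R
  | 0, _ => 1
  | k + 1, i => reindexAlgEquiv R R (finTwoProdPowEquiv k)
      (Fin.lastCases (pauliZ ⊗ₖ 1) (fun j => pauliX ⊗ₖ cliffordMatrix k j) i)

@[simp]
theorem cliffordMatrix_succ_last (k : ℕ) :
    (cliffordMatrix (k + 1) (Fin.last (k + 1)) : Matrix _ _ R) =
      reindexAlgEquiv R R (finTwoProdPowEquiv k) (pauliZ ⊗ₖ 1) := by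
  simp [cliffordMatrix]

@[simp]
theorem cliffordMatrix_succ_castSucc (k : ℕ) (i : Fin (k + 1)) :
    (cliffordMatrix (k + 1) i.castSucc : Matrix _ _ R) =
      reindexAlgEquiv R R (finTwoProdPowEquiv k) (pauliX ⊗ₖ cliffordMatrix k i) := by
  simp [cliffordMatrix]

theorem transpose_cliffordMatrix (k : ℕ) (i : Fin (k + 1)) :
    (cliffordMatrix k i : Matrix _ _ R)ᵀ = cliffordMatrix k i := by
  induction k with
  | zero => simp [cliffordMatrix]
  | succ k ih =>
    induction i using Fin.lastCases with
    | last =>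
      rw [cliffordMatrix_succ_last, coe_reindexAlgEquiv, transpose_reindex,
        ← kroneckerMap_transpose, transpose_pauliZ, transpose_one]
    | cast j =>
      rw [cliffordMatrix_succ_castSucc, coe_reindexAlgEquiv, transpose_reindex,
        ← kroneckerMap_transpose, transpose_pauliX, ih]

theorem isHermitian_cliffordMatrix [StarRing R] (k : ℕ) (i : Fin (k + 1)) :
    (cliffordMatrix k i : Matrix _ _ R).IsHermitian := by
  induction k with
  | zero => simp [cliffordMatrix]
  | succ k ih =>
    induction i using Fin.lastCases with
    | last =>
      rw [IsHermitian, cliffordMatrix_succ_last, coe_reindexAlgEquiv, conjTranspose_reindex,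
        conjTranspose_kronecker, conjTranspose_pauliZ, conjTranspose_one]
    | cast j =>
      rw [IsHermitian, cliffordMatrix_succ_castSucc, coe_reindexAlgEquiv, conjTranspose_reindex,
        conjTranspose_kronecker, conjTranspose_pauliX, (ih j).eq]

theorem cliffordMatrix_mul_self (k : ℕ) (i : Fin (k + 1)) :
    (cliffordMatrix k i * cliffordMatrix k i : Matrix _ _ R) = 1 := by
  induction k with
  | zero => simp [cliffordMatrix]
  | succ k ih =>
    induction i using Fin.lastCases with
    | last =>
      rw [cliffordMatrix_succ_last, ← map_mul, ← mul_kronecker_mul, pauliZ_mul_self,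
        Matrix.mul_one, one_kronecker_one, map_one]
    | cast j =>
      rw [cliffordMatrix_succ_castSucc, ← map_mul, ← mul_kronecker_mul, pauliX_mul_self,
        ih, one_kronecker_one, map_one]

theorem cliffordMatrix_anticommute (k : ℕ) {i j : Fin (k + 1)} (hij : i ≠ j) :
    (cliffordMatrix k i * cliffordMatrix k j : Matrix _ _ R) =
      -(cliffordMatrix k j * cliffordMatrix k i) := by
  induction k with
  | zero => exact absurd (Subsingleton.elim (α := Fin 1) i j) hij
  | succ k ih =>
    have last_castSucc : ∀ j : Fin (k + 1),
        (cliffordMatrix (k + 1) (Fin.last _) * cliffordMatrix (k + 1) j.castSucc : Matrix _ _ R) =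
          -(cliffordMatrix (k + 1) j.castSucc * cliffordMatrix (k + 1) (Fin.last _)) := by
      intro j
      rw [cliffordMatrix_succ_last, cliffordMatrix_succ_castSucc, ← map_mul,
        ← map_mul, ← mul_kronecker_mul, ← mul_kronecker_mul, pauliZ_mul_pauliX, neg_kronecker,
        Matrix.one_mul, Matrix.mul_one, map_neg]
    induction i using Fin.lastCases with
    | last =>
      induction j using Fin.lastCases with
      | last => exact absurd rfl hij
      | cast j => exact last_castSucc j
    | cast i =>
      induction j using Fin.lastCases with
      | last => exact (neg_eq_iff_eq_neg.mpr (last_castSucc i)).symm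
      | cast j =>
        have hij' : i ≠ j := fun h => hij (congrArg Fin.castSucc h)
        rw [cliffordMatrix_succ_castSucc, cliffordMatrix_succ_castSucc, ← map_mul,
          ← map_mul, ← mul_kronecker_mul, ← mul_kronecker_mul, ih hij', kronecker_neg, map_neg]

end Clifford

theorem stmt_3_general (d : ℕ) :
    ∃ B : Fin d → Matrix (Fin (2 ^ (d - 1))) (Fin (2 ^ (d - 1))) ℂ,
      (∀ i, (B i).IsHermitian) ∧
      (∀ v : Fin d → ℝ, ∑ i, v i ^ 2 = 1 →
        (1 - ∑ i, (v i : ℂ) • B i).PosSemidef) ∧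
      ((d : ℂ) ∈ spectrum ℂ (∑ i, (B i) ⊗ₖ (B i))) ∧
      (∀ ρ : ℝ, ((ρ : ℂ) • (1 : Matrix _ _ ℂ) - ∑ i, (B i) ⊗ₖ (B i)).PosSemidef →
        (d : ℝ) ≤ ρ) := by
  set B : Fin d → Matrix (Fin (2 ^ (d - 1))) (Fin (2 ^ (d - 1))) ℂ :=
    fun i => cliffordMatrix (d - 1) (Fin.castLE (by omega) i)
  have hB : ∀ i, (B i).IsHermitian := fun i => isHermitian_cliffordMatrix _ _
  have hsq : ∀ i, B i * B i = 1 := fun i => cliffordMatrix_mul_self _ _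
  have heigen : (∑ i, B i ⊗ₖ B i) *ᵥ vec 1 = (d : ℂ) • vec 1 := by
    simpa using sum_kronecker_mulVec_vec_one (C := B) fun i => by
      rw [transpose_cliffordMatrix, hsq]
  have hvec : vec (1 : Matrix (Fin (2 ^ (d - 1))) (Fin (2 ^ (d - 1))) ℂ) ≠ 0 := by
    rw [Ne, vec_eq_zero_iff]
    exact one_ne_zero
  refine ⟨B, hB, fun v hv => ?_, mem_spectrum_of_mulVec_eq_smul hvec heigen, fun ρ hρ => ?_⟩
  · have hM : (∑ i, (v i : ℂ) • B i).IsHermitian :=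
      isSelfAdjoint_sum _ fun i _ => (hB i).smul (Complex.conj_ofReal _)
    refine hM.posSemidef_one_sub_of_mul_self_eq_one ?_
    rw [sum_smul_mul_sum_smul_of_anticommute hsq
      (fun i j hij => cliffordMatrix_anticommute _ (by simpa [Fin.ext_iff] using hij))]
    have hv' : ∑ i, (v i : ℂ) ^ 2 = 1 := by exact_mod_cast hv
    rw [hv', one_smul]
  · have := hρ.nonneg_of_mulVec_eq_smul hvec (μ := (ρ : ℂ) - d) (by
      rw [sub_mulVec, smul_mulVec, one_mulVec, heigen, sub_smul])
    exact_mod_cast sub_nonneg.mp this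

/-- For every `d ≥ 1` there are self-adjoint `2^(d-1) × 2^(d-1)` matrices `B₁,…,B_d` with
`∑ vᵢ Bᵢ ≤ I` for all unit vectors `v ∈ ℝ^d`, such that `d` is an eigenvalue of
`∑ Bᵢ ⊗ Bᵢ`; consequently `∑ Bᵢ ⊗ Bᵢ ≤ ρ I` forces `ρ ≥ d`. -/
theorem stmt_3 (d : ℕ) (hd : 1 ≤ d) :
    ∃ B : Fin d → Matrix (Fin (2 ^ (d - 1))) (Fin (2 ^ (d - 1))) ℂ,
      (∀ i, (B i).IsHermitian) ∧
      (∀ v : Fin d → ℝ, ∑ i, v i ^ 2 = 1 →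
        (1 - ∑ i, (v i : ℂ) • B i).PosSemidef) ∧
      ((d : ℂ) ∈ spectrum ℂ (∑ i, (B i) ⊗ₖ (B i))) ∧
      (∀ ρ : ℝ, ((ρ : ℂ) • (1 : Matrix _ _ ℂ) - ∑ i, (B i) ⊗ₖ (B i)).PosSemidef →
        (d : ℝ) ≤ ρ) :=
  stmt_3_general d
end

section
/- Let $A_1,\dots,A_d$ be self-adjoint contractions on a Hilbert space $H$. Then there exists a Hilbert space $K$ of dimension $2^{d-1}\cdot\dim H$, an isometry $V : H \to K$, and commuting self-adjoint operators $T_1,\dots,T_d$ on $K$ with $\|T_i\| \leq d$ for each $i$, such that $A_i = V^* T_i V$ for $i = 1,\dots,d$. -/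
/-!
Model `H ⊗ (ℂ²)^{⊗(d-1)}` as `ℓ²(G, H)` with `G = (ZMod 2)^(d-1)`, so that a flip `W` becomes a
translation `W_g`. Translations are self-adjoint unitaries (as `-g = g`) commuting with each
other and with every ampliation `A ⊗ 1`. For distinct `g₁, …, g_d ∈ G` (they exist since
`d ≤ 2^(d-1)`; the paper takes `g₁ = 0` and `gᵢ = e_{i-1}`) put `T₁ = ∑ⱼ (Aⱼ ⊗ 1) W_{gⱼ}` and
`Tᵢ = T₁ W_{gᵢ}`. Then `T₁` commutes with every `W_g`, which makes the `Tᵢ` commute, and each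
`Tᵢ` is a product of commuting self-adjoint operators. The triangle inequality gives
`‖Tᵢ‖ ≤ d`. With `V h = h δ₀`, the compression `V* Tᵢ V` picks out the terms with
`gⱼ + gᵢ = 0`, i.e. `j = i`, leaving `Aᵢ`.
-/

open ContinuousLinearMap

universe u

noncomputable section

namespace PiLp

variable {𝕜 : Type*} [RCLike 𝕜] {E : Type*} [NormedAddCommGroup E] [InnerProductSpace 𝕜 E]

section ampliation

variable (ι : Type*) [Fintype ι]

theorem norm_le_of_forall_norm_apply_le {c : ℝ} (hc : 0 ≤ c) {x y : PiLp 2 (fun _ : ι => E)}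
    (h : ∀ i, ‖x i‖ ≤ c * ‖y i‖) : ‖x‖ ≤ c * ‖y‖ := by
  refine le_of_sq_le_sq ?_ (by positivity)
  rw [mul_pow, norm_sq_eq_of_L2, norm_sq_eq_of_L2, Finset.mul_sum]
  gcongr with i
  simpa [mul_pow] using pow_le_pow_left₀ (norm_nonneg _) (h i) 2

def ampliation (A : E →L[𝕜] E) : PiLp 2 (fun _ : ι => E) →L[𝕜] PiLp 2 (fun _ : ι => E) :=
  LinearMap.mkContinuous
    { toFun := fun x => WithLp.toLp 2 fun i => A (x i)
      map_add' := fun x y => by ext; simp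
      map_smul' := fun c x => by ext; simp }
    ‖A‖ fun x => norm_le_of_forall_norm_apply_le ι (norm_nonneg A) fun i => A.le_opNorm (x i)

variable {ι}

@[simp]
theorem ampliation_apply (A : E →L[𝕜] E) (x : PiLp 2 (fun _ : ι => E)) (i : ι) :
    ampliation ι A x i = A (x i) := rfl

theorem norm_ampliation_le (A : E →L[𝕜] E) : ‖ampliation ι A‖ ≤ ‖A‖ :=
  LinearMap.mkContinuous_norm_le _ (norm_nonneg A) _

theorem adjoint_ampliation [CompleteSpace E] (A : E →L[𝕜] E) :
    adjoint (ampliation ι A) = ampliation ι (adjoint A) := by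
  refine ((eq_adjoint_iff _ _).mpr fun x y => ?_).symm
  simp only [inner_apply, ampliation_apply, adjoint_inner_left]

theorem isSelfAdjoint_ampliation [CompleteSpace E] {A : E →L[𝕜] E} (hA : IsSelfAdjoint A) :
    IsSelfAdjoint (ampliation ι A) := by
  rw [isSelfAdjoint_iff', adjoint_ampliation, hA.adjoint_eq]

end ampliation

section translate

variable (𝕜) {G : Type*} [AddCommGroup G] [Fintype G]

def translate (g : G) : PiLp 2 (fun _ : G => E) →L[𝕜] PiLp 2 (fun _ : G => E) :=
  (LinearIsometryEquiv.piLpCongrLeft 2 𝕜 E (Equiv.addRight g).symm : _ ≃ₗᵢ[𝕜] _)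

@[simp]
theorem translate_apply (g : G) (x : PiLp 2 (fun _ : G => E)) (s : G) :
    translate 𝕜 g x s = x (s + g) := by
  simp [translate]

theorem norm_translate_le (g : G) : ‖(translate 𝕜 g : PiLp 2 (fun _ : G => E) →L[𝕜] _)‖ ≤ 1 :=
  LinearIsometry.norm_toContinuousLinearMap_le _

variable {𝕜}

theorem commute_translate (g h : G) :
    Commute (translate 𝕜 g : PiLp 2 (fun _ : G => E) →L[𝕜] _) (translate 𝕜 h) :=
  ContinuousLinearMap.ext fun x => PiLp.ext fun s => by simp [add_right_comm]

theorem commute_ampliation_translate (A : E →L[𝕜] E) (g : G) :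
    Commute (ampliation G A) (translate 𝕜 g) :=
  ContinuousLinearMap.ext fun x => PiLp.ext fun s => by simp

theorem adjoint_translate [CompleteSpace E] (g : G) :
    adjoint (translate 𝕜 g : PiLp 2 (fun _ : G => E) →L[𝕜] _) = translate 𝕜 (-g) := by
  rw [translate, LinearIsometryEquiv.adjoint_eq_symm]
  ext x s
  simp

end translate

section singleL

variable (𝕜) {ι : Type*} [DecidableEq ι]

def singleL (i : ι) : E →L[𝕜] PiLp 2 (fun _ : ι => E) :=
  (PiLp.continuousLinearEquiv 2 𝕜 _).symm.toContinuousLinearMap ∘L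
    ContinuousLinearMap.single 𝕜 (fun _ : ι => E) i

@[simp]
theorem singleL_apply (i : ι) (a : E) : singleL 𝕜 i a = PiLp.single 2 i a := rfl

variable [Fintype ι] [CompleteSpace E]

theorem adjoint_singleL (i : ι) :
    adjoint (singleL 𝕜 i : E →L[𝕜] PiLp 2 (fun _ : ι => E)) = proj 2 _ i := by
  refine ((eq_adjoint_iff _ _).mpr fun x a => ?_).symm
  rw [inner_apply, Finset.sum_eq_single i]
  · simp
  · intro j _ hj; simp [hj]
  · simp

theorem isometry_singleL (i : ι) : Isometry (singleL 𝕜 i : E →L[𝕜] PiLp 2 (fun _ : ι => E)) := by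
  rw [isometry_iff_adjoint_comp_self, adjoint_singleL]
  ext a
  simp

end singleL

theorem rank_eq {𝕜 ι E : Type u} [RCLike 𝕜] [Fintype ι] [NormedAddCommGroup E]
    [InnerProductSpace 𝕜 E] :
    Module.rank 𝕜 (PiLp 2 (fun _ : ι => E)) = Fintype.card ι * Module.rank 𝕜 E := by
  rw [(WithLp.linearEquiv 2 𝕜 (ι → E)).rank_eq, rank_fun]

end PiLp

open PiLp

section commutingDilation

variable {𝕜 : Type*} [RCLike 𝕜] {E : Type*} [NormedAddCommGroup E] [InnerProductSpace 𝕜 E]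
  {ι : Type*} [Fintype ι] {G : Type*} [AddCommGroup G] [Fintype G]

def dilationBase (A : ι → E →L[𝕜] E) (g : ι → G) :
    PiLp 2 (fun _ : G => E) →L[𝕜] PiLp 2 (fun _ : G => E) :=
  ∑ j, ampliation G (A j) * translate 𝕜 (g j)

def commutingDilation (A : ι → E →L[𝕜] E) (g : ι → G) (i : ι) :
    PiLp 2 (fun _ : G => E) →L[𝕜] PiLp 2 (fun _ : G => E) :=
  dilationBase A g * translate 𝕜 (g i)

theorem commute_dilationBase_translate (A : ι → E →L[𝕜] E) (g : ι → G) (h : G) :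
    Commute (dilationBase A g) (translate 𝕜 h) :=
  .sum_left _ _ _ fun _ _ => (commute_ampliation_translate _ _).mul_left (commute_translate _ _)

theorem commute_commutingDilation (A : ι → E →L[𝕜] E) (g : ι → G) (i j : ι) :
    Commute (commutingDilation A g i) (commutingDilation A g j) :=
  ((Commute.refl _).mul_right (commute_dilationBase_translate A g _)).mul_left
    ((commute_dilationBase_translate A g _).symm.mul_right (commute_translate _ _))

theorem norm_commutingDilation_le (A : ι → E →L[𝕜] E) (g : ι → G) (i : ι) :
    ‖commutingDilation A g i‖ ≤ ∑ j, ‖A j‖ := by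
  have hW (h : G) : ‖(translate 𝕜 h : PiLp 2 (fun _ : G => E) →L[𝕜] _)‖ ≤ 1 :=
    norm_translate_le 𝕜 h
  have hT : ‖dilationBase A g‖ ≤ ∑ j, ‖A j‖ :=
    (norm_sum_le _ _).trans <| Finset.sum_le_sum fun j _ =>
      (norm_mul_le_of_le (norm_ampliation_le _) (hW _)).trans_eq (mul_one _)
  exact (norm_mul_le_of_le hT (hW _)).trans_eq (mul_one _)

variable [CompleteSpace E] [Module (ZMod 2) G]

theorem isSelfAdjoint_translate (g : G) :
    IsSelfAdjoint (translate 𝕜 g : PiLp 2 (fun _ : G => E) →L[𝕜] _) := by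
  rw [isSelfAdjoint_iff', adjoint_translate, ZModModule.neg_eq_self]

theorem isSelfAdjoint_commutingDilation {A : ι → E →L[𝕜] E} (hA : ∀ i, IsSelfAdjoint (A i))
    (g : ι → G) (i : ι) : IsSelfAdjoint (commutingDilation A g i) := by
  have hT : IsSelfAdjoint (dilationBase A g) := by
    refine isSelfAdjoint_sum (R := PiLp 2 (fun _ : G => E) →L[𝕜] PiLp 2 (fun _ : G => E)) _
      fun j _ => ?_
    exact ((isSelfAdjoint_ampliation (hA j)).commute_iff (isSelfAdjoint_translate _)).mp
      (commute_ampliation_translate _ _)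
  exact (hT.commute_iff (isSelfAdjoint_translate _)).mp (commute_dilationBase_translate A g _)

theorem adjoint_singleL_comp_commutingDilation_comp_singleL [DecidableEq G]
    (A : ι → E →L[𝕜] E) {g : ι → G} (hg : Function.Injective g) (i : ι) :
    adjoint (singleL 𝕜 0) ∘L commutingDilation A g i ∘L singleL 𝕜 0 = A i := by
  ext a
  have hne : ∀ j ≠ i, g j + g i ≠ 0 := fun j hj => by
    rwa [← ZModModule.sub_eq_add, sub_ne_zero, hg.ne_iff]
  simp only [adjoint_singleL, commutingDilation, dilationBase, comp_apply, mul_apply_eq_comp,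
    sum_apply, map_sum, proj_apply, ampliation_apply, translate_apply, singleL_apply, zero_add]
  rw [Finset.sum_eq_single i (fun j _ hj => by simp [hne j hj]) (by simp)]
  simp [ZModModule.add_self]

end commutingDilation

theorem exists_injective_fin_zmod_two (d : ℕ) :
    ∃ g : Fin d → Fin (d - 1) → ZMod 2, Function.Injective g := by
  have hcard : Fintype.card (Fin d) ≤ Fintype.card (Fin (d - 1) → ZMod 2) := by
    have := (d - 1).lt_two_pow_self
    simp only [Fintype.card_fin, Fintype.card_fun, ZMod.card]
    omega
  obtain ⟨g⟩ := Function.Embedding.nonempty_of_card_le hcard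
  exact ⟨g, g.injective⟩

end

/-- Every `d`-tuple of self-adjoint contractions on a Hilbert space `H` dilates to a
commuting `d`-tuple of self-adjoint operators of norm at most `d` on a Hilbert space `K`
of dimension `2^(d-1) · dim H`. -/
theorem stmt_4 (d : ℕ) {H : Type} [NormedAddCommGroup H] [InnerProductSpace ℂ H]
    [CompleteSpace H] (A : Fin d → H →L[ℂ] H)
    (hsa : ∀ i, IsSelfAdjoint (A i)) (hc : ∀ i, ‖A i‖ ≤ 1) :
    ∃ (K : Type) (_ : NormedAddCommGroup K) (_ : InnerProductSpace ℂ K)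
      (_ : CompleteSpace K) (V : H →L[ℂ] K) (T : Fin d → K →L[ℂ] K),
      Module.rank ℂ K = (2 : Cardinal) ^ (d - 1) * Module.rank ℂ H ∧
      Isometry V ∧
      (∀ i j, Commute (T i) (T j)) ∧
      (∀ i, IsSelfAdjoint (T i)) ∧
      (∀ i, ‖T i‖ ≤ (d : ℝ)) ∧
      (∀ i, A i = (ContinuousLinearMap.adjoint V) ∘L (T i) ∘L V) := by
  obtain ⟨g, hg⟩ := exists_injective_fin_zmod_two d
  refine ⟨PiLp 2 (fun _ : Fin (d - 1) → ZMod 2 => H), inferInstance, inferInstance, inferInstance,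
    PiLp.singleL ℂ 0, commutingDilation A g, ?_, PiLp.isometry_singleL ℂ 0,
    commute_commutingDilation A g, isSelfAdjoint_commutingDilation hsa g, fun i => ?_,
    fun i => (adjoint_singleL_comp_commutingDilation_comp_singleL A hg i).symm⟩
  · simp [PiLp.rank_eq]
  · calc ‖commutingDilation A g i‖ ≤ ∑ j, ‖A j‖ := norm_commutingDilation_le A g i
      _ ≤ ∑ _j : Fin d, (1 : ℝ) := Finset.sum_le_sum fun j _ => hc j
      _ = d := by simp
end

section
/- Let $A_1,\dots,A_d$ be self-adjoint operators on a Hilbert space $H$ such that $\sum_{j=1}^d \epsilon_j A_j \leq I$ for all sign vectors $\epsilon \in \{-1,1\}^d$. Then there exist a Hilbert space $K$, an isometry $V : H \to K$, and commuting self-adjoint contractions $T_1,\dots,T_d$ on $K$ with $A_j = V^* T_j V$ for all $j$. -/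
/-!
The hypothesis says exactly that, for every sign vector `ε ∈ {±1}^d`, the operator
`P ε = 2⁻ᵈ (1 + ∑ⱼ εⱼ Aⱼ)` is positive. These weights sum to `1` and satisfy `Aⱼ = ∑_ε εⱼ P ε`
by orthogonality of the characters `ε ↦ εⱼ` of the cube, so they form a positive operator-valued
measure on the cube whose `j`-th coordinate moment is `Aⱼ`. Its Naimark dilation
`V x = (√(P ε) x)_ε` into `⨁_ε H` is an isometry, and compressing the diagonal multiplication
operators `Tⱼ = (εⱼ)_ε`, which are commuting self-adjoint symmetries, gives back `Aⱼ`.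
-/

open scoped InnerProductSpace

section SignVectors

variable {σ : Type*} [Fintype σ] [DecidableEq σ]

lemma sum_signVector_eq_zero_of_flip {F : (σ → ℤˣ) → ℝ} (j : σ)
    (hF : ∀ ε, F (Pi.mulSingle j (-1) * ε) = -F ε) : ∑ ε, F ε = 0 := by
  have h := Equiv.sum_comp (Equiv.mulLeft (Pi.mulSingle j (-1) : σ → ℤˣ)) F
  simp only [Equiv.coe_mulLeft, hF, Finset.sum_neg_distrib] at h
  linarith

lemma sum_signVector_coord (j : σ) : ∑ ε : σ → ℤˣ, ((ε j : ℤ) : ℝ) = 0 :=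
  sum_signVector_eq_zero_of_flip j fun ε => by simp

lemma sum_signVector_coord_mul (j k : σ) :
    ∑ ε : σ → ℤˣ, ((ε j : ℤ) : ℝ) * ((ε k : ℤ) : ℝ) =
      if j = k then 2 ^ Fintype.card σ else 0 := by
  split_ifs with h
  · subst h
    simp [← Int.cast_mul]
  · exact sum_signVector_eq_zero_of_flip j fun ε => by simp [Ne.symm h]

end SignVectors

section CubeWeight

variable {σ M : Type*} [Fintype σ] [AddCommGroup M] [Module ℝ M]

/-- Sign vectors are encoded as `ε : σ → ℤˣ`, so that they form a group. -/
noncomputable def cubeWeight (a : M) (A : σ → M) (ε : σ → ℤˣ) : M :=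
  ((2 : ℝ) ^ Fintype.card σ)⁻¹ • (a + ∑ j, ((ε j : ℤ) : ℝ) • A j)

lemma sum_smul_cubeWeight_eq [DecidableEq σ] (φ : (σ → ℤˣ) → ℝ) (a : M) (A : σ → M) :
    ∑ ε, φ ε • cubeWeight a A ε = ((2 : ℝ) ^ Fintype.card σ)⁻¹ •
      ((∑ ε, φ ε) • a + ∑ k, (∑ ε, φ ε * ((ε k : ℤ) : ℝ)) • A k) := by
  simp only [cubeWeight, smul_add, Finset.smul_sum, Finset.sum_add_distrib, Finset.sum_smul,
    mul_smul, smul_comm (φ _) ((2 : ℝ) ^ Fintype.card σ)⁻¹]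
  rw [Finset.sum_comm]

lemma sum_cubeWeight [DecidableEq σ] (a : M) (A : σ → M) : ∑ ε, cubeWeight a A ε = a := by
  simpa [sum_signVector_coord, Fintype.card_fun, smul_smul] using sum_smul_cubeWeight_eq 1 a A

lemma sum_smul_cubeWeight [DecidableEq σ] (a : M) (A : σ → M) (j : σ) :
    ∑ ε, ((ε j : ℤ) : ℝ) • cubeWeight a A ε = A j := by
  simp [sum_smul_cubeWeight_eq, sum_signVector_coord, sum_signVector_coord_mul, smul_smul]

end CubeWeight

namespace PiLp

variable {ι 𝕜 E : Type*} [RCLike 𝕜] [NormedAddCommGroup E] [InnerProductSpace 𝕜 E]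

noncomputable def diagMul (f : ι → ℝ) : PiLp 2 (fun _ : ι => E) →L[𝕜] PiLp 2 (fun _ : ι => E) :=
  (PiLp.continuousLinearEquiv 2 𝕜 _).symm.toContinuousLinearMap ∘L
    ContinuousLinearMap.pi (fun i => (f i : 𝕜) • PiLp.proj 2 (fun _ : ι => E) i)

@[simp]
lemma diagMul_apply (f : ι → ℝ) (x : PiLp 2 (fun _ : ι => E)) (i : ι) :
    diagMul (𝕜 := 𝕜) f x i = (f i : 𝕜) • x i := rfl

lemma commute_diagMul (f g : ι → ℝ) :
    Commute (diagMul (𝕜 := 𝕜) (E := E) f) (diagMul g) := by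
  ext x i
  simp [smul_comm (f i : 𝕜)]

lemma isSelfAdjoint_diagMul [Fintype ι] [CompleteSpace E] (f : ι → ℝ) :
    IsSelfAdjoint (diagMul (𝕜 := 𝕜) (E := E) f) := by
  rw [ContinuousLinearMap.isSelfAdjoint_iff_isSymmetric]
  intro x y
  simp [PiLp.inner_apply, inner_smul_left, inner_smul_right]

lemma norm_diagMul_le [Fintype ι] {f : ι → ℝ} (hf : ∀ i, |f i| ≤ 1) :
    ‖diagMul (𝕜 := 𝕜) (E := E) f‖ ≤ 1 := by
  refine ContinuousLinearMap.opNorm_le_bound _ zero_le_one fun x => ?_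
  rw [one_mul, PiLp.norm_eq_of_L2, PiLp.norm_eq_of_L2]
  gcongr with i
  simp only [diagMul_apply, norm_smul, RCLike.norm_ofReal]
  exact mul_le_of_le_one_left (norm_nonneg _) (hf i)

@[simp]
lemma diagMul_one : diagMul (𝕜 := 𝕜) (E := E) (1 : ι → ℝ) = 1 := by
  ext x i
  simp

end PiLp

section Dilation

variable {ι E : Type*} [NormedAddCommGroup E] [InnerProductSpace ℂ E] [CompleteSpace E]

open ContinuousLinearMap

noncomputable def sqrtDilation (P : ι → E →L[ℂ] E) : E →L[ℂ] PiLp 2 (fun _ : ι => E) :=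
  (PiLp.continuousLinearEquiv 2 ℂ _).symm.toContinuousLinearMap ∘L
    ContinuousLinearMap.pi (fun i => CFC.sqrt (P i))

@[simp]
lemma sqrtDilation_apply (P : ι → E →L[ℂ] E) (x : E) (i : ι) :
    sqrtDilation P x i = CFC.sqrt (P i) x := rfl

lemma adjoint_sqrtDilation_comp_diagMul_comp [Fintype ι] {P : ι → E →L[ℂ] E}
    (hP : ∀ i, 0 ≤ P i) (f : ι → ℝ) :
    adjoint (sqrtDilation P) ∘L PiLp.diagMul f ∘L sqrtDilation P = ∑ i, f i • P i := by
  refine ext fun x => ext_inner_right ℂ fun y => ?_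
  have hsqrt (i : ι) (u v : E) : ⟪CFC.sqrt (P i) u, CFC.sqrt (P i) v⟫_ℂ = ⟪P i u, v⟫_ℂ := by
    rw [← adjoint_inner_left, (CFC.sqrt_nonneg (P i)).isSelfAdjoint.adjoint_eq,
      ← mul_apply_eq_comp, CFC.sqrt_mul_sqrt_self (P i) (hP i)]
  simp only [comp_apply, adjoint_inner_left, PiLp.inner_apply, PiLp.diagMul_apply,
    sqrtDilation_apply, sum_apply, sum_inner, smul_apply, RCLike.real_smul_eq_coe_smul (K := ℂ),
    inner_smul_left, hsqrt]

lemma isometry_sqrtDilation [Fintype ι] {P : ι → E →L[ℂ] E} (hP : ∀ i, 0 ≤ P i)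
    (hsum : ∑ i, P i = 1) : Isometry (sqrtDilation P) := by
  rw [isometry_iff_adjoint_comp_self, ← hsum]
  simpa [one_def] using adjoint_sqrtDilation_comp_diagMul_comp hP 1

end Dilation

theorem stmt_6_general (d : ℕ) {H : Type} [NormedAddCommGroup H] [InnerProductSpace ℂ H]
    [CompleteSpace H] (A : Fin d → H →L[ℂ] H)
    (hdiamond : ∀ ε : Fin d → ℝ, (∀ j, ε j = 1 ∨ ε j = -1) →
      ((1 : H →L[ℂ] H) - ∑ j, ε j • A j).IsPositive) :
    ∃ (K : Type) (_ : NormedAddCommGroup K) (_ : InnerProductSpace ℂ K)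
      (_ : CompleteSpace K) (V : H →L[ℂ] K) (T : Fin d → K →L[ℂ] K),
      Isometry V ∧
      (∀ i j, Commute (T i) (T j)) ∧
      (∀ j, IsSelfAdjoint (T j)) ∧
      (∀ j, ‖T j‖ ≤ 1) ∧
      (∀ j, A j = (ContinuousLinearMap.adjoint V) ∘L (T j) ∘L V) := by
  set P := cubeWeight (1 : H →L[ℂ] H) A
  have hP (ε : Fin d → ℤˣ) : 0 ≤ P ε := by
    have hsign (j : Fin d) : -((ε j : ℤ) : ℝ) = 1 ∨ -((ε j : ℤ) : ℝ) = -1 := by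
      rcases Int.units_eq_one_or (ε j) with h | h <;> simp [h]
    have hpos := (ContinuousLinearMap.nonneg_iff_isPositive _).mpr (hdiamond _ hsign)
    simp only [neg_smul, Finset.sum_neg_distrib, sub_neg_eq_add] at hpos
    exact smul_nonneg (by positivity) hpos
  refine ⟨_, inferInstance, inferInstance, inferInstance, sqrtDilation P,
    fun j => PiLp.diagMul fun ε => ((ε j : ℤ) : ℝ),
    isometry_sqrtDilation hP (sum_cubeWeight _ _),
    fun i j => PiLp.commute_diagMul _ _, fun j => PiLp.isSelfAdjoint_diagMul _,
    fun j => PiLp.norm_diagMul_le fun ε => ?_, fun j => ?_⟩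
  · rcases Int.units_eq_one_or (ε j) with h | h <;> simp [h]
  · rw [adjoint_sqrtDilation_comp_diagMul_comp hP, sum_smul_cubeWeight]

/-- If `A₁,…,A_d` are self-adjoint operators with `∑ εⱼ Aⱼ ≤ I` for all sign vectors
`ε ∈ {-1,1}^d`, then `A` dilates to a commuting tuple of self-adjoint contractions. -/
theorem stmt_6 (d : ℕ) {H : Type} [NormedAddCommGroup H] [InnerProductSpace ℂ H]
    [CompleteSpace H] (A : Fin d → H →L[ℂ] H)
    (hsa : ∀ j, IsSelfAdjoint (A j))
    (hdiamond : ∀ ε : Fin d → ℝ, (∀ j, ε j = 1 ∨ ε j = -1) →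
      ((1 : H →L[ℂ] H) - ∑ j, ε j • A j).IsPositive) :
    ∃ (K : Type) (_ : NormedAddCommGroup K) (_ : InnerProductSpace ℂ K)
      (_ : CompleteSpace K) (V : H →L[ℂ] K) (T : Fin d → K →L[ℂ] K),
      Isometry V ∧
      (∀ i j, Commute (T i) (T j)) ∧
      (∀ j, IsSelfAdjoint (T j)) ∧
      (∀ j, ‖T j‖ ≤ 1) ∧
      (∀ j, A j = (ContinuousLinearMap.adjoint V) ∘L (T j) ∘L V) :=
  stmt_6_general d A hdiamond
end

section
/- Let $A_1,\dots,A_d$ be self-adjoint contractions on a Hilbert space $H$. Then there exist a Hilbert space $K$, an isometry $V: H \to K$, and commuting self-adjoint operators $T_1,\dots,T_d$ on $K$ such that $A_j = V^*T_jV$ for all $j$, and $\sum_{j=1}^d \epsilon_j T_j \leq d\, I$ for every sign vector $\epsilon \in \{-1,1\}^d$. -/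
/-!
Take `K = H^d` with the `ℓ²` norm, `V h = d^{-1/2} (h, …, h)` and `T j` the block-diagonal
operator with the single nonzero block `d • A j` in position `j`. Forming block-diagonal
operators is a star-algebra homomorphism `∏ᵢ L(H) → L(K)`, hence monotone; so the `T j` commute,
are self-adjoint, and `d • 1 - ∑ εⱼ • T j` is block diagonal with the blocks
`d • (1 - ε k • A k)`, which are positive because `‖ε k • A k‖ ≤ 1`. Compressing a
block-diagonal operator by `V` averages its blocks, which gives both `V* T j V = A j` and
`V* V = 1`.
-/

open ContinuousLinearMap

lemma IsSelfAdjoint.le_one_of_norm_le_one {A : Type*} [CStarAlgebra A] [PartialOrder A]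
    [StarOrderedRing A] {a : A} (ha : IsSelfAdjoint a) (h : ‖a‖ ≤ 1) : a ≤ 1 :=
  ha.le_algebraMap_norm_self.trans (by simpa using algebraMap_mono A h)

namespace PiLp

section

variable {𝕜 ι : Type*} [RCLike 𝕜] [Fintype ι] {E : ι → Type*}
  [∀ i, NormedAddCommGroup (E i)] [∀ i, InnerProductSpace 𝕜 (E i)] [∀ i, CompleteSpace (E i)]

noncomputable def blockDiagonal : (∀ i, E i →L[𝕜] E i) →⋆ₐ[𝕜] (PiLp 2 E →L[𝕜] PiLp 2 E) where
  toFun B := (PiLp.continuousLinearEquiv 2 𝕜 E).symm.toContinuousLinearMap ∘L piMap B ∘L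
    (PiLp.continuousLinearEquiv 2 𝕜 E).toContinuousLinearMap
  map_one' := by ext; rfl
  map_mul' _ _ := by ext; rfl
  map_zero' := by ext; rfl
  map_add' _ _ := by ext; rfl
  commutes' _ := by ext; rfl
  map_star' B := by
    refine (eq_adjoint_iff _ _).2 fun x y => ?_
    simp [PiLp.inner_apply, star_eq_adjoint, adjoint_inner_left]

@[simp]
lemma blockDiagonal_apply (B : ∀ i, E i →L[𝕜] E i) (x : PiLp 2 E) (i : ι) :
    blockDiagonal B x i = B i (x i) := rfl

variable {F : Type*} [NormedAddCommGroup F] [InnerProductSpace 𝕜 F]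

variable (ι) in
noncomputable def normalizedDiagonal : F →L[𝕜] PiLp 2 (fun _ : ι => F) :=
  (√(Fintype.card ι : ℝ) : 𝕜)⁻¹ • (PiLp.continuousLinearEquiv 2 𝕜 _).symm.toContinuousLinearMap ∘L
    ContinuousLinearMap.pi fun _ => ContinuousLinearMap.id 𝕜 F

@[simp]
lemma normalizedDiagonal_apply (x : F) (i : ι) :
    normalizedDiagonal (𝕜 := 𝕜) ι x i = (√(Fintype.card ι : ℝ) : 𝕜)⁻¹ • x := rfl

lemma adjoint_normalizedDiagonal_comp_blockDiagonal_comp [CompleteSpace F] (B : ι → F →L[𝕜] F) :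
    adjoint (normalizedDiagonal ι) ∘L blockDiagonal B ∘L normalizedDiagonal ι =
      (Fintype.card ι : 𝕜)⁻¹ • ∑ i, B i := by
  have hsq : (√(Fintype.card ι : ℝ) : 𝕜)⁻¹ * (√(Fintype.card ι : ℝ) : 𝕜)⁻¹ =
      (Fintype.card ι : 𝕜)⁻¹ := by
    rw [← mul_inv, ← RCLike.ofReal_mul, Real.mul_self_sqrt (Nat.cast_nonneg _),
      RCLike.ofReal_natCast]
  ext x
  refine ext_inner_right 𝕜 fun y => ?_
  simp [adjoint_inner_left, PiLp.inner_apply, inner_smul_left, inner_smul_right, sum_inner,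
    Finset.mul_sum, ← mul_assoc, hsq]

lemma isometry_normalizedDiagonal [CompleteSpace F] [Nonempty ι] :
    Isometry (normalizedDiagonal (𝕜 := 𝕜) (F := F) ι) := by
  have h := adjoint_normalizedDiagonal_comp_blockDiagonal_comp (𝕜 := 𝕜) (F := F) (ι := ι) 1
  rw [map_one, one_def, id_comp] at h
  simp only [Pi.one_apply, Finset.sum_const, Finset.card_univ] at h
  rw [← Nat.cast_smul_eq_nsmul 𝕜, inv_smul_smul₀ (by simp)] at h
  exact (isometry_iff_adjoint_comp_self _).2 h

variable [DecidableEq ι] [CompleteSpace F]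

noncomputable def blockDilation (A : ι → F →L[𝕜] F) (j : ι) :
    PiLp 2 (fun _ : ι => F) →L[𝕜] PiLp 2 (fun _ : ι => F) :=
  blockDiagonal (Pi.single j ((Fintype.card ι : 𝕜) • A j))

lemma commute_blockDilation (A : ι → F →L[𝕜] F) (i j : ι) :
    Commute (blockDilation A i) (blockDilation A j) := by
  refine .map ?_ blockDiagonal
  by_cases hij : i = j
  · rw [hij]
  · ext1 k
    by_cases hki : k = i <;> by_cases hkj : k = j <;> simp_all

lemma isSelfAdjoint_blockDilation {A : ι → F →L[𝕜] F} (j : ι) (hA : IsSelfAdjoint (A j)) :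
    IsSelfAdjoint (blockDilation A j) := by
  refine .map ?_ blockDiagonal
  have h : IsSelfAdjoint ((Fintype.card ι : 𝕜) • A j) := (IsSelfAdjoint.natCast _).smul hA
  rw [IsSelfAdjoint, ← Pi.single_star, h.star_eq]

lemma adjoint_normalizedDiagonal_comp_blockDilation_comp [Nonempty ι] (A : ι → F →L[𝕜] F) (j : ι) :
    adjoint (normalizedDiagonal ι) ∘L blockDilation A j ∘L normalizedDiagonal ι = A j := by
  rw [blockDilation, adjoint_normalizedDiagonal_comp_blockDiagonal_comp, Fintype.sum_pi_single',
    inv_smul_smul₀ (by simp)]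

end

section Complex

variable {ι : Type*} [Fintype ι] [DecidableEq ι]
  {H : Type*} [NormedAddCommGroup H] [InnerProductSpace ℂ H] [CompleteSpace H]

lemma card_smul_one_sub_sum_smul_blockDilation (A : ι → H →L[ℂ] H) (ε : ι → ℝ) :
    (Fintype.card ι : ℝ) • 1 - ∑ j, ε j • blockDilation A j =
      blockDiagonal fun k => (Fintype.card ι : ℝ) • (1 - ε k • A k) := by
  refine ContinuousLinearMap.ext fun x => PiLp.ext fun k => ?_
  have hoff : ∀ j ≠ k, ε j • blockDilation A j x k = 0 := fun j hj => by
    simp [blockDilation, Pi.single_eq_of_ne hj.symm]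
  simp only [_root_.sub_apply, _root_.smul_apply, sum_apply, one_apply_eq_self, WithLp.ofLp_sub,
    WithLp.ofLp_sum, WithLp.ofLp_smul, Pi.sub_apply, Pi.smul_apply, Finset.sum_apply]
  rw [Fintype.sum_eq_single k hoff]
  simp [blockDilation, smul_sub, smul_comm (ε k), Nat.cast_smul_eq_nsmul]

lemma isPositive_card_smul_one_sub_sum_smul_blockDilation {A : ι → H →L[ℂ] H}
    (hA : ∀ j, IsSelfAdjoint (A j)) (hA_norm : ∀ j, ‖A j‖ ≤ 1) {ε : ι → ℝ} (hε : ∀ j, |ε j| ≤ 1) :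
    ((Fintype.card ι : ℝ) • 1 - ∑ j, ε j • blockDilation A j).IsPositive := by
  rw [← nonneg_iff_isPositive, card_smul_one_sub_sum_smul_blockDilation]
  refine map_nonneg blockDiagonal fun k => smul_nonneg (Nat.cast_nonneg _) (sub_nonneg.2 ?_)
  refine ((IsSelfAdjoint.all (ε k)).smul (hA k)).le_one_of_norm_le_one ?_
  rw [norm_smul, Real.norm_eq_abs]
  exact mul_le_one₀ (hε k) (norm_nonneg _) (hA_norm k)

end Complex

end PiLp

/-- Every `d`-tuple of self-adjoint contractions dilates to a commuting self-adjoint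
tuple `T` satisfying `∑ εⱼ Tⱼ ≤ d·I` for all sign vectors `ε ∈ {-1,1}^d`. -/
theorem stmt_7 (d : ℕ) {H : Type} [NormedAddCommGroup H] [InnerProductSpace ℂ H]
    [CompleteSpace H] (A : Fin d → H →L[ℂ] H)
    (hsa : ∀ j, IsSelfAdjoint (A j)) (hc : ∀ j, ‖A j‖ ≤ 1) :
    ∃ (K : Type) (_ : NormedAddCommGroup K) (_ : InnerProductSpace ℂ K)
      (_ : CompleteSpace K) (V : H →L[ℂ] K) (T : Fin d → K →L[ℂ] K),
      Isometry V ∧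
      (∀ i j, Commute (T i) (T j)) ∧
      (∀ j, IsSelfAdjoint (T j)) ∧
      (∀ j, A j = (ContinuousLinearMap.adjoint V) ∘L (T j) ∘L V) ∧
      (∀ ε : Fin d → ℝ, (∀ j, ε j = 1 ∨ ε j = -1) →
        ((d : ℝ) • (1 : K →L[ℂ] K) - ∑ j, ε j • T j).IsPositive) := by
  rcases Nat.eq_zero_or_pos d with rfl | hd
  · refine ⟨H, _, _, _, 1, 0, isometry_id, fun _ _ => .zero_left _, fun _ => .zero _,
      finZeroElim, fun _ _ => by simp⟩
  have : NeZero d := ⟨hd.ne'⟩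
  refine ⟨PiLp 2 (fun _ : Fin d => H), _, _, _, PiLp.normalizedDiagonal (Fin d),
    PiLp.blockDilation A, PiLp.isometry_normalizedDiagonal, PiLp.commute_blockDilation A,
    fun j => PiLp.isSelfAdjoint_blockDilation j (hsa j),
    fun j => (PiLp.adjoint_normalizedDiagonal_comp_blockDilation_comp A j).symm, fun ε hε => ?_⟩
  have hε_abs : ∀ j, |ε j| ≤ 1 := fun j => by rcases hε j with h | h <;> simp [h]
  simpa using PiLp.isPositive_card_smul_one_sub_sum_smul_blockDilation hsa hc hε_abs
end

section
/- Let $\lambda^{(1)},\dots,\lambda^{(k)}$ be real $d\times d$ matrices with $I_d = \sum_{p=1}^k \beta_p \lambda^{(p)}$ for nonnegative reals $\beta_p$ summing to 1. With $S_{i,j} = \mathrm{diag}(\lambda^{(1)}_{i,j},\dots,\lambda^{(k)}_{i,j})$, $T_i = \sum_{j=1}^d X_j \otimes S_{i,j}$ and $v = \sum_{p=1}^k \sqrt{\beta_p}\, e_p \in \mathbb{C}^k$, the map $V: H \to H\otimes \mathbb{C}^k$, $Vh = h \otimes v$, is an isometry and $V^* T_i V = X_i$ for all $i$. -/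
open scoped InnerProductSpace

/-- With `I_d = ∑ₚ βₚ λ⁽ᵖ⁾` (`βₚ ≥ 0`, `∑ βₚ = 1`), `Tᵢ = ∑ⱼ Xⱼ ⊗ S_{i,j}` on
`H ⊗ ℂᵏ ≅ ⊕ₚ H` and `V h = h ⊗ v` for `v = ∑ₚ √βₚ eₚ`, the map `V` is an isometry
and `V* Tᵢ V = Xᵢ` (expressed via inner products). -/
theorem stmt_9 (d k : ℕ) {H : Type} [NormedAddCommGroup H] [InnerProductSpace ℂ H]
    [CompleteSpace H]
    (lam : Fin k → Matrix (Fin d) (Fin d) ℝ) (β : Fin k → ℝ)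
    (hβnn : ∀ p, 0 ≤ β p) (hβ1 : ∑ p, β p = 1)
    (hid : ∀ i j, (if i = j then (1 : ℝ) else 0) = ∑ p, β p * lam p i j)
    (X : Fin d → H →L[ℂ] H) (hX : ∀ j, IsSelfAdjoint (X j))
    (T : Fin d → (PiLp 2 fun _ : Fin k => H) → (PiLp 2 fun _ : Fin k => H))
    (hT : ∀ i h p, T i h p = ∑ j, (lam p i j : ℂ) • X j (h p))
    (V : H → PiLp 2 fun _ : Fin k => H)
    (hV : ∀ h p, V h p = (Real.sqrt (β p) : ℂ) • h) :
    (∀ h, ‖V h‖ = ‖h‖) ∧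
    (∀ (i : Fin d) (h h' : H), ⟪T i (V h), V h'⟫_ℂ = ⟪X i h, h'⟫_ℂ) := by
  constructor
  · intro h
    have h1 : ‖V h‖ ^ 2 = ‖h‖ ^ 2 := by
      have := PiLp.norm_sq_eq_of_L2 (fun _ : Fin k => H) (V h)
      rw [this]
      simp only [hV, norm_smul, Complex.norm_real, Real.norm_eq_abs,
        abs_of_nonneg (Real.sqrt_nonneg _), mul_pow, Real.sq_sqrt (hβnn _)]
      rw [← Finset.sum_mul, hβ1, one_mul]
    rw [← Real.sqrt_sq (norm_nonneg (V h)), ← Real.sqrt_sq (norm_nonneg h), h1]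
  · intro i h h'
    have hinner : ⟪T i (V h), V h'⟫_ℂ = ∑ p, ⟪T i (V h) p, V h' p⟫_ℂ :=
      PiLp.inner_apply _ _
    rw [hinner]
    have key : ∀ p, ⟪T i (V h) p, V h' p⟫_ℂ
        = ∑ j, ((β p * lam p i j : ℝ) : ℂ) * ⟪X j h, h'⟫_ℂ := by
      intro p
      rw [hT, hV, hV]
      rw [inner_smul_right, sum_inner]
      rw [Finset.mul_sum]
      congr 1; ext j
      rw [inner_smul_left]
      simp only [map_smul]
      rw [inner_smul_left]
      ring_nf
      rw [Complex.conj_ofReal, Complex.conj_ofReal]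
      push_cast
      ring_nf
      have : ((Real.sqrt (β p) : ℂ))^2 = (β p : ℂ) := by
        rw [← Complex.ofReal_pow, Real.sq_sqrt (hβnn p)]
      rw [this]; ring
    simp only [key]
    rw [Finset.sum_comm]
    have : ∀ j, ∑ p, ((β p * lam p i j : ℝ) : ℂ) * ⟪X j h, h'⟫_ℂ
        = ((if i = j then (1:ℝ) else 0 : ℝ) : ℂ) * ⟪X j h, h'⟫_ℂ := by
      intro j
      rw [← Finset.sum_mul, hid i j]
      push_cast
      ring_nf
    rw [Finset.sum_congr rfl fun j _ => this j]
    simp [Finset.sum_ite_eq, apply_ite (fun x : ℝ => (x : ℂ))]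
end

section
/- Let $K = \mathrm{conv}\{(1,1,1),(1,-1,-1),(-1,1,-1),(-1,-1,1)\} \subseteq \mathbb{R}^3$ (the regular 3-simplex), and for $m = 1,\dots,4$ let $P_m = \frac{1}{3} v_m v_m^*$ be the orthogonal projection onto the span of the $m$-th vertex $v_m$. Then $P_m(K) \subseteq K$ for each $m$, and $\sum_{m=1}^4 \frac{3}{4} P_m = I_3$. -/
open Matrix

/-- The vertices of the regular 3-simplex. -/
noncomputable def simplexVertex : Fin 4 → Fin 3 → ℝ :=
  ![![1, 1, 1], ![1, -1, -1], ![-1, 1, -1], ![-1, -1, 1]]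

/-- The orthogonal projection onto the span of the `m`-th vertex. -/
noncomputable def simplexProj (m : Fin 4) : Matrix (Fin 3) (Fin 3) ℝ :=
  (1 / 3 : ℝ) • Matrix.vecMulVec (simplexVertex m) (simplexVertex m)

/-! The vertices `vₘ` satisfy `∑ vₘ = 0` and `vₘ ⬝ vₖ = -1` for `m ≠ k`, so `Pₘ vₖ = -vₘ / 3` is the
centroid of the other three vertices, while `Pₘ vₘ = vₘ`. A linear map sending the vertices of a
polytope into it preserves the polytope. The identity `∑ vₘ vₘᵀ = 4 I` is a direct computation. -/

theorem LinearMap.image_convexHull_subset_of_mapsTo {E : Type*} [AddCommGroup E] [Module ℝ E]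
    (f : E →ₗ[ℝ] E) {s : Set E} (hf : ∀ x ∈ s, f x ∈ convexHull ℝ s) :
    f '' convexHull ℝ s ⊆ convexHull ℝ s := by
  rw [f.image_convexHull]
  exact convexHull_min (Set.image_subset_iff.mpr hf) (convex_convexHull ℝ s)

theorem neg_inv_card_sub_one_smul_mem_convexHull {ι E : Type*} [Fintype ι] [Nontrivial ι]
    [AddCommGroup E] [Module ℝ E] {v : ι → E} (hv : ∑ i, v i = 0) (m : ι) :
    -(((Fintype.card ι : ℝ) - 1)⁻¹ • v m) ∈ convexHull ℝ (Set.range v) := by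
  classical
  have hcard : 1 < Fintype.card ι := Fintype.one_lt_card
  have hsum : ∑ i ∈ Finset.univ.erase m, v i = -v m := by
    rw [eq_neg_iff_add_eq_zero, add_comm, Finset.add_sum_erase _ _ (Finset.mem_univ m), hv]
  have hweight : ∑ _i ∈ Finset.univ.erase m, (1 : ℝ) = (Fintype.card ι : ℝ) - 1 := by
    rw [Finset.sum_const, Finset.card_erase_of_mem (Finset.mem_univ m), Finset.card_univ,
      nsmul_eq_mul, mul_one, Nat.cast_sub hcard.le, Nat.cast_one]
  have hmem := (Finset.univ.erase m).centerMass_mem_convexHull (w := fun _ => (1 : ℝ))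
    (fun _ _ => zero_le_one) (by rw [hweight]; linarith [(Nat.one_lt_cast (α := ℝ)).mpr hcard])
    (fun i _ => Set.mem_range_self (f := v) i)
  simpa only [Finset.centerMass, hweight, one_smul, hsum, smul_neg] using hmem

theorem sum_simplexVertex : ∑ m, simplexVertex m = 0 := by
  ext i
  fin_cases i <;> simp [simplexVertex, Fin.sum_univ_four]

theorem simplexVertex_dotProduct (m k : Fin 4) :
    simplexVertex m ⬝ᵥ simplexVertex k = if m = k then 3 else -1 := by
  fin_cases m <;> fin_cases k <;> simp [simplexVertex, dotProduct, Fin.sum_univ_three] <;> norm_num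

theorem simplexProj_mulVec (m : Fin 4) (x : Fin 3 → ℝ) :
    simplexProj m *ᵥ x = ((1 / 3 : ℝ) * (simplexVertex m ⬝ᵥ x)) • simplexVertex m := by
  rw [simplexProj, smul_mulVec, vecMulVec_mulVec, op_smul_eq_smul, smul_smul]

theorem simplexProj_mulVec_simplexVertex_mem (m k : Fin 4) :
    simplexProj m *ᵥ simplexVertex k ∈ convexHull ℝ (Set.range simplexVertex) := by
  rw [simplexProj_mulVec, simplexVertex_dotProduct]
  split_ifs
  · norm_num
    exact subset_convexHull ℝ _ (Set.mem_range_self m)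
  · have h := neg_inv_card_sub_one_smul_mem_convexHull sum_simplexVertex m
    norm_num at h ⊢
    simpa only [neg_smul, neg_div] using h

theorem sum_vecMulVec_simplexVertex :
    ∑ m, vecMulVec (simplexVertex m) (simplexVertex m) = (4 : ℝ) • 1 := by
  ext i j
  fin_cases i <;> fin_cases j <;>
    simp [simplexVertex, vecMulVec, vecHead, vecTail, Fin.sum_univ_four] <;> norm_num

/-- Each projection onto a vertex of the regular 3-simplex maps the simplex into itself,
and `∑ₘ (3/4) Pₘ = I₃`. -/
theorem stmt_12 :
    (∀ m : Fin 4,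
      (fun x => (simplexProj m).mulVec x) '' convexHull ℝ (Set.range simplexVertex)
        ⊆ convexHull ℝ (Set.range simplexVertex)) ∧
    (∑ m : Fin 4, (3 / 4 : ℝ) • simplexProj m = (1 : Matrix (Fin 3) (Fin 3) ℝ)) := by
  refine ⟨fun m => ?_, ?_⟩
  · refine (simplexProj m).mulVecLin.image_convexHull_subset_of_mapsTo ?_
    rintro _ ⟨k, rfl⟩
    exact simplexProj_mulVec_simplexVertex_mem m k
  · simp only [simplexProj, smul_smul, ← Finset.smul_sum, sum_vecMulVec_simplexVertex]
    norm_num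
end

section
/- Let $T = \begin{pmatrix}1 & 2\\ 0 & 1\end{pmatrix}$ and let $c > 0$. Then $\|cT - I\| > 1$, where $\|\cdot\|$ denotes the operator norm on $M_2(\mathbb{C})$. -/
/-! On the test vector `x = (1, -1)` we get `(cT - I) x = (-(c + 1), 1 - c)`, whose squared
length `2 + 2c²` exceeds `‖x‖² = 2` as soon as `c ≠ 0`. -/

open Matrix
open scoped Matrix.Norms.L2Operator

theorem Matrix.one_lt_l2_opNorm_of_norm_lt {𝕜 m n : Type*} [RCLike 𝕜] [Fintype m] [Fintype n]
    [DecidableEq n] {A : Matrix m n 𝕜} {x : EuclideanSpace 𝕜 n}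
    (h : ‖x‖ < ‖WithLp.toLp 2 (A *ᵥ x)‖) : 1 < ‖A‖ := by
  by_contra! hA
  have hx : ‖A‖ * ‖x‖ ≤ ‖x‖ := mul_le_of_le_one_left (norm_nonneg x) hA
  exact (h.trans_le (A.l2_opNorm_mulVec x)).not_ge hx

/-- For `T = [[1,2],[0,1]]` and every `c > 0`, the operator norm of `cT - I` exceeds `1`. -/
theorem stmt_14 (c : ℝ) (hc : 0 < c) :
    1 < ‖(c : ℂ) • (!![1, 2; 0, 1] : Matrix (Fin 2) (Fin 2) ℂ) - 1‖ := by
  set x : EuclideanSpace ℂ (Fin 2) := !₂[1, -1]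
  have hAx : ((c : ℂ) • (!![1, 2; 0, 1] : Matrix (Fin 2) (Fin 2) ℂ) - 1) *ᵥ x
      = ![((-(c + 1) : ℝ) : ℂ), ((1 - c : ℝ) : ℂ)] := by
    ext i
    fin_cases i <;> simp [x, mulVec, dotProduct, Fin.sum_univ_two, one_apply]; ring
  apply Matrix.one_lt_l2_opNorm_of_norm_lt (x := x)
  rw [hAx, ← sq_lt_sq₀ (norm_nonneg _) (norm_nonneg _), EuclideanSpace.norm_sq_eq,
    EuclideanSpace.norm_sq_eq]
  simp only [x, Fin.sum_univ_two, cons_val_zero, cons_val_one,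
    Complex.norm_real, Real.norm_eq_abs, sq_abs, norm_neg, norm_one]
  nlinarith
end
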